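/- arXiv:math/0202007 — 7 statements merged into one kernel-verified Lean document; each statement's English description precedes it below -/
import Mathlib

section
/- For every pattern τ in S₃, the number of permutations of length n avoiding τ equals the n-th Catalan number, binom(2n,n)/(n+1). -/
/-- An occurrence of the pattern `τ` (of length `k`) in the permutation `π` (of length `n`)
is a strictly increasing map of positions along which `π` is order-isomorphic to `τ`. -/
def IsOcc {k n : ℕ} (τ : Fin k → Fin k) (π : Fin n → Fin n) (f : Fin k → Fin n) : Prop :=
  StrictMono f ∧ ∀ i j : Fin k, τ i < τ j ↔ π (f i) < π (f j)

/-- `π` avoids the pattern `τ`. -/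
def Avoids {k n : ℕ} (τ : Fin k → Fin k) (π : Fin n → Fin n) : Prop :=
  ¬ ∃ f, IsOcc τ π f

/-- `π` contains exactly one occurrence of the pattern `τ`. -/
def ContainsOnce {k n : ℕ} (τ : Fin k → Fin k) (π : Fin n → Fin n) : Prop :=
  ∃! f, IsOcc τ π f

def p123 : Fin 3 → Fin 3 := ![0, 1, 2]
def p132 : Fin 3 → Fin 3 := ![0, 2, 1]
def p213 : Fin 3 → Fin 3 := ![1, 0, 2]
def p231 : Fin 3 → Fin 3 := ![1, 2, 0]
def p312 : Fin 3 → Fin 3 := ![2, 0, 1]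
def p321 : Fin 3 → Fin 3 := ![2, 1, 0]

/-!
Reversal `π ↦ π ∘ rev` and complement `π ↦ rev ∘ π` preserve avoidance (with the pattern
transformed alike), so the six patterns of `S₃` fall into the classes of `132` and `123`.

For both `132` and `123` the avoiders form a generating tree. Every avoider of length `n + 1`
arises in exactly one way from an avoider `t` of length `n` by prepending a first entry
`k ≤ n` and shifting the entries `≥ k` of `t` up by one, and the result avoids the pattern
iff `k ≥ s t`, where `s t` is one more than the largest entry of `t` that has a larger entry
before it (for `132`) resp. after it (for `123`). The children of `t` then have statistics
`s t, …, n`, each exactly once. Hence the number of avoiders of length `n` with statistic `j`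
obeys the recurrence of Catalan's triangle, whose row sums are the Catalan numbers by the
first-return decomposition.
-/

namespace PatternAvoidance

open Function

section Symmetry

variable {k n : ℕ}

lemma isOcc_comp_rev_iff {τ : Fin k → Fin k} {π : Fin n → Fin n} {f : Fin k → Fin n} :
    IsOcc (τ ∘ Fin.rev) (π ∘ Fin.rev) (Fin.rev ∘ f ∘ Fin.rev) ↔ IsOcc τ π f := by
  refine and_congr ?_ ?_
  · constructor <;> intro h i j hij <;> simpa using h (Fin.rev_lt_rev.mpr hij)
  · constructor <;> intro h i j <;> simpa using h i.rev j.rev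

lemma isOcc_rev_comp_iff {τ : Fin k → Fin k} {π : Fin n → Fin n} {f : Fin k → Fin n} :
    IsOcc (Fin.rev ∘ τ) (Fin.rev ∘ π) f ↔ IsOcc τ π f :=
  and_congr_right fun _ => by
    simp only [comp_apply, Fin.rev_lt_rev]
    exact ⟨fun h i j => h j i, fun h i j => h j i⟩

lemma avoids_comp_rev_iff {τ : Fin k → Fin k} {π : Fin n → Fin n} :
    Avoids (τ ∘ Fin.rev) (π ∘ Fin.rev) ↔ Avoids τ π := by
  refine not_congr ⟨fun ⟨f, hf⟩ => ⟨Fin.rev ∘ f ∘ Fin.rev, ?_⟩,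
    fun ⟨f, hf⟩ => ⟨_, isOcc_comp_rev_iff.mpr hf⟩⟩
  rw [← isOcc_comp_rev_iff]
  simpa [comp_def] using hf

lemma avoids_rev_comp_iff {τ : Fin k → Fin k} {π : Fin n → Fin n} :
    Avoids (Fin.rev ∘ τ) (Fin.rev ∘ π) ↔ Avoids τ π :=
  not_congr (exists_congr fun _ => isOcc_rev_comp_iff)

lemma card_bijective_avoids_comp_rev (τ : Fin k → Fin k) :
    Nat.card {π : Fin n → Fin n // Bijective π ∧ Avoids (τ ∘ Fin.rev) π} =
      Nat.card {π : Fin n → Fin n // Bijective π ∧ Avoids τ π} := by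
  refine Nat.card_congr ((Involutive.toPerm (· ∘ Fin.rev) fun π => ?_).subtypeEquiv
    fun π => and_congr ?_ ?_)
  · ext; simp
  · exact (Fin.revPerm.bijective_comp π).symm
  · change _ ↔ Avoids τ (π ∘ Fin.rev)
    rw [← avoids_comp_rev_iff (π := π ∘ Fin.rev), comp_assoc, Fin.rev_involutive.comp_self,
      comp_id]

lemma card_bijective_avoids_rev_comp (τ : Fin k → Fin k) :
    Nat.card {π : Fin n → Fin n // Bijective π ∧ Avoids (Fin.rev ∘ τ) π} =
      Nat.card {π : Fin n → Fin n // Bijective π ∧ Avoids τ π} := by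
  refine Nat.card_congr ((Involutive.toPerm (Fin.rev ∘ ·) fun π => ?_).subtypeEquiv
    fun π => and_congr ?_ ?_)
  · ext; simp
  · exact (Fin.revPerm.comp_bijective π).symm
  · change _ ↔ Avoids τ (Fin.rev ∘ π)
    rw [← avoids_rev_comp_iff (π := Fin.rev ∘ π), ← comp_assoc, Fin.rev_involutive.comp_self,
      id_comp]

end Symmetry

section Ballot

open Finset

-- `ballot n j` will count the avoiders of length `n` with statistic `j`.
def ballot : ℕ → ℕ → ℕ
  | 0, j => if j = 0 then 1 else 0
  | n + 1, j => if j ≤ n then ∑ i ∈ range (j + 1), ballot n i else 0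

lemma ballot_succ_of_le {n j : ℕ} (h : j ≤ n) :
    ballot (n + 1) j = ∑ i ∈ range (j + 1), ballot n i := if_pos h

lemma ballot_succ_self (n : ℕ) : ballot (n + 1) (n + 1) = 0 := if_neg (by omega)

lemma ballot_succ_eq_sum_ballot (n : ℕ) :
    ballot (n + 1) n = ∑ j ∈ range (n + 1), ballot n j := ballot_succ_of_le le_rfl

-- Split a ballot path at its first return to the diagonal.
def FirstReturn (n : ℕ) : Prop :=
  ∀ j ≤ n, ballot (n + 1) j = ∑ a ∈ range (j + 1), catalan a * ballot (n - a) (j - a)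

lemma sum_ballot_eq_catalan_of_firstReturn {n : ℕ} (h : FirstReturn n) :
    ∑ j ∈ range (n + 1), ballot n j = catalan n := by
  rw [← ballot_succ_eq_sum_ballot, h n le_rfl, sum_range_succ, sum_eq_zero]
  · simp [ballot]
  · intro a ha
    rw [show n - a = n - a - 1 + 1 by simp at ha; omega, ballot_succ_self, mul_zero]

lemma sum_ballot_succ_of_firstReturn {m : ℕ} (h : FirstReturn m) {j : ℕ} (hj : j ≤ m) :
    ∑ i ∈ range (j + 1), ballot (m + 1) i =
      ∑ a ∈ range (j + 1), catalan a * ballot (m + 1 - a) (j - a) := by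
  calc ∑ i ∈ range (j + 1), ballot (m + 1) i
      = ∑ i ∈ range (j + 1), ∑ a ∈ range (i + 1), catalan a * ballot (m - a) (i - a) :=
        sum_congr rfl fun i hi => h i (by simp at hi; omega)
    _ = ∑ a ∈ range (j + 1), ∑ i ∈ Ico a (j + 1), catalan a * ballot (m - a) (i - a) := by
        simp only [range_eq_Ico]
        rw [sum_Ico_Ico_comm]
    _ = ∑ a ∈ range (j + 1), catalan a * ballot (m + 1 - a) (j - a) := by
        refine sum_congr rfl fun a ha => ?_
        simp only [mem_range] at ha
        rw [← mul_sum, sum_Ico_eq_sum_range, show m + 1 - a = m - a + 1 by omega,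
          ballot_succ_of_le (by omega), show j + 1 - a = j - a + 1 by omega]
        simp

lemma firstReturn (n : ℕ) : FirstReturn n := by
  induction n using Nat.strong_induction_on with
  | _ n ih =>
    rcases n with _ | m
    · intro j hj
      obtain rfl : j = 0 := by omega
      simp [ballot]
    intro j hj
    rw [ballot_succ_of_le hj]
    rcases Nat.lt_or_ge j (m + 1) with hjm | hjm
    · exact sum_ballot_succ_of_firstReturn (ih m (by omega)) (by omega)
    obtain rfl : j = m + 1 := by omega
    have hcat : ∀ p ≤ m, ∑ j ∈ range (p + 1), ballot p j = catalan p :=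
      fun p hp => sum_ballot_eq_catalan_of_firstReturn (ih p (by omega))
    calc ∑ i ∈ range (m + 2), ballot (m + 1) i
        = ∑ a ∈ range (m + 1), catalan a * ballot (m + 1 - a) (m - a) := by
          rw [sum_range_succ, ballot_succ_self, add_zero,
            sum_ballot_succ_of_firstReturn (ih m (by omega)) le_rfl]
      _ = catalan (m + 1) := by
          rw [catalan_succ, Fin.sum_univ_eq_sum_range (fun a => catalan a * catalan (m - a))]
          refine sum_congr rfl fun a ha => ?_
          simp only [mem_range] at ha
          rw [show m + 1 - a = m - a + 1 by omega, ballot_succ_eq_sum_ballot, hcat _ (by omega)]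
      _ = _ := by
          rw [sum_range_succ, sum_eq_zero fun a ha => ?_]
          · simp [ballot]
          · rw [show m + 1 - a = m - a + 1 by simp at ha; omega, ballot_succ_self, mul_zero]

lemma sum_ballot (n : ℕ) : ∑ j ∈ range (n + 1), ballot n j = catalan n :=
  sum_ballot_eq_catalan_of_firstReturn (firstReturn n)

end Ballot

open List

def Contains (R : ℕ → ℕ → ℕ → Prop) (l : List ℕ) : Prop :=
  ∃ a b c, [a, b, c] <+ l ∧ R a b c

def Is132 (a b c : ℕ) : Prop := a < c ∧ c < b
def Is123 (a b c : ℕ) : Prop := a < b ∧ b < c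

lemma isOcc_p132_iff {n : ℕ} {π : Fin n → Fin n} (hπ : Injective π) {f : Fin 3 → Fin n} :
    IsOcc p132 π f ↔ StrictMono f ∧ Is132 (π (f 0)) (π (f 1)) (π (f 2)) := by
  refine and_congr_right fun hf => ?_
  have h01 : π (f 0) ≠ π (f 1) := hπ.ne (hf.injective.ne (by decide))
  have h02 : π (f 0) ≠ π (f 2) := hπ.ne (hf.injective.ne (by decide))
  have h12 : π (f 1) ≠ π (f 2) := hπ.ne (hf.injective.ne (by decide))
  simp [Fin.forall_fin_succ, Is132, p132]
  omega

lemma isOcc_p123_iff {n : ℕ} {π : Fin n → Fin n} (hπ : Injective π) {f : Fin 3 → Fin n} :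
    IsOcc p123 π f ↔ StrictMono f ∧ Is123 (π (f 0)) (π (f 1)) (π (f 2)) := by
  refine and_congr_right fun hf => ?_
  have h01 : π (f 0) ≠ π (f 1) := hπ.ne (hf.injective.ne (by decide))
  have h02 : π (f 0) ≠ π (f 2) := hπ.ne (hf.injective.ne (by decide))
  have h12 : π (f 1) ≠ π (f 2) := hπ.ne (hf.injective.ne (by decide))
  simp [Fin.forall_fin_succ, Is123, p123]
  omega

lemma sublist_ofFn_iff {α : Type*} {m n : ℕ} (s : Fin m → α) (g : Fin n → α) :
    ofFn s <+ ofFn g ↔ ∃ f : Fin m → Fin n, StrictMono f ∧ s = g ∘ f := by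
  rw [sublist_iff_exists_fin_orderEmbedding_get_eq]
  constructor
  · rintro ⟨e, he⟩
    refine ⟨fun i => Fin.cast length_ofFn (e (Fin.cast length_ofFn.symm i)),
      fun i j hij => e.strictMono hij, funext fun i => ?_⟩
    simpa [Fin.cast] using he (Fin.cast length_ofFn.symm i)
  · rintro ⟨f, hf, rfl⟩
    refine ⟨OrderEmbedding.ofStrictMono
      (fun i => Fin.cast length_ofFn.symm (f (Fin.cast length_ofFn i))) fun i j hij => hf hij,
      fun i => ?_⟩
    simp [Fin.cast]

lemma contains_ofFn_iff {R : ℕ → ℕ → ℕ → Prop} {n : ℕ} (g : Fin n → ℕ) :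
    Contains R (ofFn g) ↔ ∃ f : Fin 3 → Fin n, StrictMono f ∧ R (g (f 0)) (g (f 1)) (g (f 2)) := by
  constructor
  · rintro ⟨a, b, c, hs, hR⟩
    rw [show [a, b, c] = ofFn ![a, b, c] by simp, sublist_ofFn_iff] at hs
    obtain ⟨f, hf, habc⟩ := hs
    obtain ⟨rfl, rfl, rfl⟩ : a = g (f 0) ∧ b = g (f 1) ∧ c = g (f 2) :=
      ⟨congrFun habc 0, congrFun habc 1, congrFun habc 2⟩
    exact ⟨f, hf, hR⟩
  · rintro ⟨f, hf, hR⟩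
    refine ⟨_, _, _, ?_, hR⟩
    rw [show [g (f 0), g (f 1), g (f 2)] = ofFn (g ∘ f) by simp [ofFn_succ], sublist_ofFn_iff]
    exact ⟨f, hf, rfl⟩

lemma ofFn_perm_range {n : ℕ} {π : Fin n → Fin n} (hπ : Bijective π) :
    ofFn (fun i => (π i : ℕ)) ~ range n := by
  refine (perm_ext_iff_of_nodup (nodup_ofFn.mpr (Fin.val_injective.comp hπ.injective))
    nodup_range).mpr fun y => ?_
  simp only [mem_ofFn, mem_range]
  refine ⟨fun ⟨i, hi⟩ => hi ▸ (π i).isLt, fun hy => ?_⟩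
  obtain ⟨i, hi⟩ := hπ.surjective ⟨y, hy⟩
  exact ⟨i, by simp [hi]⟩

lemma exists_ofFn_eq_of_perm_range {n : ℕ} {l : List ℕ} (hl : l ~ range n) :
    ∃ π : Fin n → Fin n, Bijective π ∧ ofFn (fun i => (π i : ℕ)) = l := by
  obtain rfl : l.length = n := by simpa using hl.length_eq
  have hlt : ∀ i : Fin l.length, l[i] < l.length := fun i => by
    simpa using hl.subset (getElem_mem i.isLt)
  refine ⟨fun i => ⟨l[i], hlt i⟩, ?_, ofFn_getElem⟩
  refine Finite.injective_iff_bijective.mp fun i j hij => ?_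
  exact (hl.nodup_iff.mpr nodup_range).getElem_inj_iff.mp (congrArg Fin.val hij) |> Fin.ext

-- A permutation of length `n` is modelled by the list `l ~ range n` of its values.
noncomputable def avoiders (R : ℕ → ℕ → ℕ → Prop) (n : ℕ) : Finset (List ℕ) := by
  classical exact (range n).permutations.toFinset.filter (¬ Contains R ·)

lemma mem_avoiders {R : ℕ → ℕ → ℕ → Prop} {n : ℕ} {l : List ℕ} :
    l ∈ avoiders R n ↔ l ~ range n ∧ ¬ Contains R l := by
  classical
  simp [avoiders, mem_permutations]

lemma card_bijective_avoids_eq_card_avoiders {τ : Fin 3 → Fin 3} {R : ℕ → ℕ → ℕ → Prop}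
    (hτR : ∀ {n} {π : Fin n → Fin n}, Injective π → ∀ f,
      IsOcc τ π f ↔ StrictMono f ∧ R (π (f 0)) (π (f 1)) (π (f 2))) (n : ℕ) :
    Nat.card {π : Fin n → Fin n // Bijective π ∧ Avoids τ π} = (avoiders R n).card := by
  have avoids_iff {π : Fin n → Fin n} (hπ : Injective π) :
      Avoids τ π ↔ ¬ Contains R (ofFn fun i => (π i : ℕ)) := by
    rw [Avoids, contains_ofFn_iff]
    exact not_congr (exists_congr fun f => hτR hπ f)
  rw [← Nat.card_eq_finsetCard]
  refine Nat.card_eq_of_bijective (fun π => ⟨ofFn fun i => (π.1 i : ℕ),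
    mem_avoiders.mpr ⟨ofFn_perm_range π.2.1, (avoids_iff π.2.1.injective).mp π.2.2⟩⟩) ⟨?_, ?_⟩
  · intro π σ h
    have := ofFn_injective (congrArg Subtype.val h)
    exact Subtype.ext (funext fun i => Fin.ext (congrFun this i))
  · rintro ⟨l, hl⟩
    obtain ⟨hperm, hav⟩ := mem_avoiders.mp hl
    obtain ⟨π, hπ, rfl⟩ := exists_ofFn_eq_of_perm_range hperm
    exact ⟨⟨π, hπ, (avoids_iff hπ.injective).mpr hav⟩, rfl⟩

def succAbove (k x : ℕ) : ℕ := if x < k then x else x + 1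
def predAbove (k x : ℕ) : ℕ := if x < k then x else x - 1

lemma succAbove_strictMono (k : ℕ) : StrictMono (succAbove k) := by
  intro a b hab; unfold succAbove; split_ifs <;> omega

lemma succAbove_ne (k x : ℕ) : succAbove k x ≠ k := by unfold succAbove; split_ifs <;> omega

lemma lt_succAbove_iff {k x : ℕ} : k < succAbove k x ↔ k ≤ x := by
  unfold succAbove; split_ifs <;> omega

lemma succAbove_of_lt {k x : ℕ} (h : x < k) : succAbove k x = x := if_pos h

lemma succAbove_lt_succ_iff {k n x : ℕ} (hk : k ≤ n) : succAbove k x < n + 1 ↔ x < n := by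
  unfold succAbove; split_ifs <;> omega

lemma succAbove_predAbove {k x : ℕ} (h : x ≠ k) : succAbove k (predAbove k x) = x := by
  unfold predAbove
  split_ifs with hx
  · exact succAbove_of_lt hx
  · unfold succAbove; split_ifs <;> omega

lemma predAbove_succAbove (k x : ℕ) : predAbove k (succAbove k x) = x := by
  unfold succAbove predAbove; split_ifs <;> omega

lemma predAbove_lt {k n x : ℕ} (hk : k ≤ n) (hx : x < n + 1) (h : x ≠ k) :
    predAbove k x < n := by
  unfold predAbove; split_ifs <;> omega

def prepend (k : ℕ) (t : List ℕ) : List ℕ := k :: t.map (succAbove k)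

lemma prepend_inj {k k' : ℕ} {t t' : List ℕ} : prepend k t = prepend k' t' ↔ k = k' ∧ t = t' := by
  refine ⟨fun h => ?_, fun ⟨rfl, rfl⟩ => rfl⟩
  obtain ⟨rfl, h⟩ := cons_eq_cons.mp h
  exact ⟨rfl, map_injective_iff.mpr (succAbove_strictMono k).injective h⟩

lemma perm_range_iff {n : ℕ} {l : List ℕ} : l ~ range n ↔ l.Nodup ∧ ∀ x, x ∈ l ↔ x < n := by
  refine ⟨fun h => ⟨h.nodup_iff.mpr nodup_range, fun x => by simp [h.mem_iff]⟩, fun ⟨hl, hx⟩ =>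
    (perm_ext_iff_of_nodup hl nodup_range).mpr fun x => by simp [hx]⟩

lemma prepend_perm_range {n k : ℕ} {t : List ℕ} (hk : k ≤ n) (ht : t ~ range n) :
    prepend k t ~ range (n + 1) := by
  obtain ⟨hnd, hmem⟩ := perm_range_iff.mp ht
  refine perm_range_iff.mpr ⟨nodup_cons.mpr ⟨?_, hnd.map (succAbove_strictMono k).injective⟩, ?_⟩
  · simpa using fun x _ => succAbove_ne k x
  · intro y
    simp only [prepend, mem_cons, mem_map, hmem]
    constructor
    · rintro (rfl | ⟨x, hx, rfl⟩)
      · omega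
      · exact (succAbove_lt_succ_iff hk).mpr hx
    · intro hy
      by_cases hyk : y = k
      · exact Or.inl hyk
      · exact Or.inr ⟨predAbove k y, predAbove_lt hk hy hyk, succAbove_predAbove hyk⟩

lemma exists_eq_prepend {n : ℕ} {l : List ℕ} (hl : l ~ range (n + 1)) :
    ∃ k ≤ n, ∃ t, t ~ range n ∧ l = prepend k t := by
  obtain ⟨hnd, hmem⟩ := perm_range_iff.mp hl
  obtain _ | ⟨k, t'⟩ := l
  · simpa using hmem 0
  obtain ⟨hk, hnd'⟩ := nodup_cons.mp hnd
  have hne : ∀ x ∈ t', x ≠ k := fun x hx h => hk (h ▸ hx)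
  have hkn : k ≤ n := by simpa [Nat.lt_succ_iff] using hmem k
  refine ⟨k, hkn, t'.map (predAbove k), perm_range_iff.mpr ⟨?_, fun y => ?_⟩, ?_⟩
  · refine hnd'.map_on fun x hx y hy hxy => ?_
    rw [← succAbove_predAbove (hne x hx), hxy, succAbove_predAbove (hne y hy)]
  · simp only [mem_map]
    constructor
    · rintro ⟨x, hx, rfl⟩
      exact predAbove_lt hkn ((hmem x).mp (mem_cons_of_mem k hx)) (hne x hx)
    · intro hy
      refine ⟨succAbove k y, ?_, predAbove_succAbove k y⟩
      have := (hmem (succAbove k y)).mpr ((succAbove_lt_succ_iff hkn).mpr hy)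
      exact (mem_cons.mp this).resolve_left (succAbove_ne k y)
  · rw [prepend, map_map]
    congr 1
    exact ((map_congr_left fun x hx => succAbove_predAbove (hne x hx)).trans (map_id t')).symm

lemma pair_sublist_map_iff {f : ℕ → ℕ} {t : List ℕ} {p q : ℕ} :
    [p, q] <+ t.map f ↔ ∃ a b, [a, b] <+ t ∧ f a = p ∧ f b = q := by
  rw [sublist_map_iff]
  constructor
  · rintro ⟨_ | ⟨a, _ | ⟨b, _ | _⟩⟩, h, he⟩ <;> simp only [map_cons, map_nil, reduceCtorEq,
      cons.injEq, and_false, and_true] at he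
    exact ⟨a, b, h, he.1.symm, he.2.symm⟩
  · rintro ⟨a, b, h, rfl, rfl⟩
    exact ⟨[a, b], h, rfl⟩

lemma contains_cons_iff {R : ℕ → ℕ → ℕ → Prop} {a : ℕ} {t : List ℕ} :
    Contains R (a :: t) ↔ Contains R t ∨ ∃ b c, [b, c] <+ t ∧ R a b c := by
  simp only [Contains, cons_sublist_cons']
  constructor
  · rintro ⟨a', b, c, h | ⟨rfl, h⟩, hR⟩
    exacts [Or.inl ⟨a', b, c, h, hR⟩, Or.inr ⟨b, c, h, hR⟩]
  · rintro (⟨a', b, c, h, hR⟩ | ⟨b, c, h, hR⟩)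
    exacts [⟨a', b, c, Or.inl h, hR⟩, ⟨a, b, c, Or.inr ⟨rfl, h⟩, hR⟩]

lemma contains_map_iff {R : ℕ → ℕ → ℕ → Prop} {f : ℕ → ℕ}
    (hR : ∀ a b c, R (f a) (f b) (f c) ↔ R a b c) {t : List ℕ} :
    Contains R (t.map f) ↔ Contains R t := by
  constructor
  · rintro ⟨_, _, _, hs, hRf⟩
    obtain ⟨_ | ⟨a, _ | ⟨b, _ | ⟨c, _ | _⟩⟩⟩, h, he⟩ := sublist_map_iff.mp hs <;>
      simp only [map_cons, map_nil, reduceCtorEq, cons.injEq, and_false, and_true] at he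
    obtain ⟨rfl, rfl, rfl⟩ := he
    exact ⟨a, b, c, h, (hR a b c).mp hRf⟩
  · rintro ⟨a, b, c, h, hRabc⟩
    exact ⟨f a, f b, f c, h.map f, (hR a b c).mpr hRabc⟩

def HasLargerBefore (t : List ℕ) (x : ℕ) : Prop := ∃ b, [b, x] <+ t ∧ x < b
def HasLargerAfter (t : List ℕ) (x : ℕ) : Prop := ∃ c, [x, c] <+ t ∧ x < c

lemma contains_is132_cons_iff {a : ℕ} {t : List ℕ} :
    Contains Is132 (a :: t) ↔ Contains Is132 t ∨ ∃ x, HasLargerBefore t x ∧ a < x := by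
  rw [contains_cons_iff]
  exact or_congr_right ⟨fun ⟨b, c, h, hac, hcb⟩ => ⟨c, ⟨b, h, hcb⟩, hac⟩,
    fun ⟨c, ⟨b, h, hcb⟩, hac⟩ => ⟨b, c, h, hac, hcb⟩⟩

lemma contains_is123_cons_iff {a : ℕ} {t : List ℕ} :
    Contains Is123 (a :: t) ↔ Contains Is123 t ∨ ∃ x, HasLargerAfter t x ∧ a < x := by
  rw [contains_cons_iff]
  exact or_congr_right ⟨fun ⟨b, c, h, hab, hbc⟩ => ⟨b, ⟨c, h, hbc⟩, hab⟩,
    fun ⟨b, ⟨c, h, hbc⟩, hab⟩ => ⟨b, c, h, hab, hbc⟩⟩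

lemma hasLargerBefore_cons_iff {a x : ℕ} {t : List ℕ} :
    HasLargerBefore (a :: t) x ↔ HasLargerBefore t x ∨ (x ∈ t ∧ x < a) := by
  simp only [HasLargerBefore, cons_sublist_cons', singleton_sublist]
  constructor
  · rintro ⟨b, h | ⟨rfl, h⟩, hx⟩
    exacts [Or.inl ⟨b, h, hx⟩, Or.inr ⟨h, hx⟩]
  · rintro (⟨b, h, hx⟩ | ⟨h, hx⟩)
    exacts [⟨b, Or.inl h, hx⟩, ⟨a, Or.inr ⟨rfl, h⟩, hx⟩]

lemma hasLargerAfter_cons_iff {a x : ℕ} {t : List ℕ} :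
    HasLargerAfter (a :: t) x ↔ HasLargerAfter t x ∨ (x = a ∧ ∃ c ∈ t, a < c) := by
  simp only [HasLargerAfter, cons_sublist_cons', singleton_sublist]
  constructor
  · rintro ⟨c, h | ⟨rfl, h⟩, hx⟩
    exacts [Or.inl ⟨c, h, hx⟩, Or.inr ⟨rfl, c, h, hx⟩]
  · rintro (⟨c, h, hx⟩ | ⟨rfl, c, h, hx⟩)
    exacts [⟨c, Or.inl h, hx⟩, ⟨c, Or.inr ⟨rfl, h⟩, hx⟩]

lemma hasLargerBefore_map_iff {f : ℕ → ℕ} (hf : StrictMono f) {t : List ℕ} {y : ℕ} :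
    HasLargerBefore (t.map f) y ↔ ∃ x, HasLargerBefore t x ∧ f x = y := by
  simp only [HasLargerBefore, pair_sublist_map_iff]
  constructor
  · rintro ⟨_, ⟨b, x, h, rfl, rfl⟩, hx⟩
    exact ⟨x, ⟨b, h, hf.lt_iff_lt.mp hx⟩, rfl⟩
  · rintro ⟨x, ⟨b, h, hx⟩, rfl⟩
    exact ⟨f b, ⟨b, x, h, rfl, rfl⟩, hf hx⟩

lemma hasLargerAfter_map_iff {f : ℕ → ℕ} (hf : StrictMono f) {t : List ℕ} {y : ℕ} :
    HasLargerAfter (t.map f) y ↔ ∃ x, HasLargerAfter t x ∧ f x = y := by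
  simp only [HasLargerAfter, pair_sublist_map_iff]
  constructor
  · rintro ⟨_, ⟨x, c, h, rfl, rfl⟩, hx⟩
    exact ⟨x, ⟨c, h, hf.lt_iff_lt.mp hx⟩, rfl⟩
  · rintro ⟨x, ⟨c, h, hx⟩, rfl⟩
    exact ⟨f c, ⟨x, c, h, rfl, rfl⟩, hf hx⟩

noncomputable def bound (P : ℕ → Prop) (t : List ℕ) : ℕ := by
  classical exact (t.toFinset.filter P).sup (· + 1)

lemma bound_le_iff {P : ℕ → Prop} {t : List ℕ} {c : ℕ} (hP : ∀ x, P x → x ∈ t) :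
    bound P t ≤ c ↔ ∀ x, P x → x < c := by
  classical
  simp only [bound, Finset.sup_le_iff, Finset.mem_filter, mem_toFinset, Nat.add_one_le_iff]
  exact ⟨fun h x hx => h x ⟨hP x hx, hx⟩, fun h x hx => h x hx.2⟩

noncomputable def bound132 (t : List ℕ) : ℕ := bound (HasLargerBefore t) t
noncomputable def bound123 (t : List ℕ) : ℕ := bound (HasLargerAfter t) t

lemma bound132_le_iff {t : List ℕ} {c : ℕ} :
    bound132 t ≤ c ↔ ∀ x, HasLargerBefore t x → x < c :=
  bound_le_iff fun _ ⟨_, h, _⟩ => h.subset (by simp)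

lemma bound123_le_iff {t : List ℕ} {c : ℕ} :
    bound123 t ≤ c ↔ ∀ x, HasLargerAfter t x → x < c :=
  bound_le_iff fun _ ⟨_, h, _⟩ => h.subset (by simp)

lemma is132_map_iff {f : ℕ → ℕ} (hf : StrictMono f) (a b c : ℕ) :
    Is132 (f a) (f b) (f c) ↔ Is132 a b c := by
  simp only [Is132, hf.lt_iff_lt]

lemma is123_map_iff {f : ℕ → ℕ} (hf : StrictMono f) (a b c : ℕ) :
    Is123 (f a) (f b) (f c) ↔ Is123 a b c := by
  simp only [Is123, hf.lt_iff_lt]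

lemma not_contains_is132_prepend_iff {k : ℕ} {t : List ℕ} :
    ¬ Contains Is132 (prepend k t) ↔ ¬ Contains Is132 t ∧ bound132 t ≤ k := by
  rw [prepend, contains_is132_cons_iff, not_or,
    contains_map_iff (is132_map_iff (succAbove_strictMono k)), bound132_le_iff]
  simp only [hasLargerBefore_map_iff (succAbove_strictMono k), not_exists, not_and,
    forall_exists_index, and_imp, forall_apply_eq_imp_iff₂, lt_succAbove_iff, not_le]

lemma not_contains_is123_prepend_iff {k : ℕ} {t : List ℕ} :
    ¬ Contains Is123 (prepend k t) ↔ ¬ Contains Is123 t ∧ bound123 t ≤ k := by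
  rw [prepend, contains_is123_cons_iff, not_or,
    contains_map_iff (is123_map_iff (succAbove_strictMono k)), bound123_le_iff]
  simp only [hasLargerAfter_map_iff (succAbove_strictMono k), not_exists, not_and,
    forall_exists_index, and_imp, forall_apply_eq_imp_iff₂, lt_succAbove_iff, not_le]

lemma bound132_prepend {n k : ℕ} {t : List ℕ} (hk : k ≤ n) (ht : t ~ range n)
    (hb : bound132 t ≤ k) : bound132 (prepend k t) = k := by
  refine eq_of_forall_ge_iff fun c => ?_
  simp only [bound132_le_iff, prepend, hasLargerBefore_cons_iff,
    hasLargerBefore_map_iff (succAbove_strictMono k), mem_map, or_imp, forall_and,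
    forall_exists_index, and_imp, forall_apply_eq_imp_iff₂] at hb ⊢
  refine ⟨fun ⟨_, h⟩ => ?_, fun hkc => ⟨fun x hx => ?_, fun x hx hxk => hxk.trans_le hkc⟩⟩
  · rcases Nat.eq_zero_or_pos k with rfl | hk0
    · exact Nat.zero_le c
    · have := h (k - 1) (by simp [ht.mem_iff]; omega) (by rw [succAbove_of_lt] <;> omega)
      rw [succAbove_of_lt (by omega)] at this
      omega
  · rw [succAbove_of_lt (hb x hx)]
    exact (hb x hx).trans_le hkc

lemma bound123_prepend {n k : ℕ} {t : List ℕ} (hk : k ≤ n) (ht : t ~ range n)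
    (hb : bound123 t ≤ k) : bound123 (prepend k t) = if k < n then k + 1 else bound123 t := by
  have hlt : ∀ x ∈ t, x < n := fun x hx => by simpa using ht.subset hx
  rw [bound123_le_iff] at hb
  refine eq_of_forall_ge_iff fun c => ?_
  have hfix : ∀ x, HasLargerAfter t x → succAbove k x = x := fun x hx => succAbove_of_lt (hb x hx)
  split_ifs with hkn
  · obtain ⟨y, hy, hky⟩ : ∃ y ∈ t, k < succAbove k y :=
      ⟨n - 1, by simp [ht.mem_iff]; omega, lt_succAbove_iff.mpr (by omega)⟩
    simp only [bound123_le_iff, prepend, hasLargerAfter_cons_iff,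
      hasLargerAfter_map_iff (succAbove_strictMono k), mem_map, or_imp, forall_and,
      forall_exists_index, and_imp, forall_apply_eq_imp_iff₂, forall_eq, Nat.add_one_le_iff]
    refine ⟨fun ⟨_, h⟩ => h y hy hky, fun hkc => ⟨fun x hx => ?_, fun _ _ _ => hkc⟩⟩
    rw [hfix x hx]
    exact (hb x hx).trans hkc
  · obtain rfl : k = n := by omega
    simp only [bound123_le_iff, prepend, hasLargerAfter_cons_iff,
      hasLargerAfter_map_iff (succAbove_strictMono k), mem_map, or_imp, forall_and,
      forall_exists_index, and_imp, forall_apply_eq_imp_iff₂, forall_eq]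
    refine ⟨fun h x hx => hfix x hx ▸ h.1 x hx, fun h => ⟨fun x hx => (hfix x hx).symm ▸ h x hx,
      fun x hx hkx => ?_⟩⟩
    rw [succAbove_of_lt (hlt x hx)] at hkx
    exact absurd (hlt x hx) hkx.not_gt

lemma avoiders_zero (R : ℕ → ℕ → ℕ → Prop) : avoiders R 0 = {[]} := by
  ext l
  simp only [mem_avoiders, range_zero, perm_nil, Finset.mem_singleton, and_iff_left_iff_imp]
  rintro rfl ⟨_, _, _, h, _⟩
  simpa using h.length_le

lemma mem_avoiders_succ_iff {R : ℕ → ℕ → ℕ → Prop} {s : List ℕ → ℕ}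
    (hR : ∀ {k t}, ¬ Contains R (prepend k t) ↔ ¬ Contains R t ∧ s t ≤ k) {n : ℕ} {l : List ℕ} :
    l ∈ avoiders R (n + 1) ↔ ∃ k ≤ n, ∃ t ∈ avoiders R n, s t ≤ k ∧ l = prepend k t := by
  simp only [mem_avoiders]
  constructor
  · rintro ⟨hl, hav⟩
    obtain ⟨k, hk, t, ht, rfl⟩ := exists_eq_prepend hl
    obtain ⟨hav, hst⟩ := hR.mp hav
    exact ⟨k, hk, t, ⟨ht, hav⟩, hst, rfl⟩
  · rintro ⟨k, hk, t, ⟨ht, hav⟩, hst, rfl⟩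
    exact ⟨prepend_perm_range hk ht, hR.mpr ⟨hav, hst⟩⟩

lemma card_filter_le_eq_sum (A : Finset (List ℕ)) (s : List ℕ → ℕ) (j : ℕ) :
    (A.filter (s · ≤ j)).card = ∑ i ∈ Finset.range (j + 1), (A.filter (s · = i)).card := by
  rw [Finset.card_eq_sum_card_fiberwise (f := s) (t := Finset.range (j + 1))
    fun l hl => by simpa [Nat.lt_succ_iff] using (Finset.mem_filter.mp hl).2]
  refine Finset.sum_congr rfl fun i hi => ?_
  rw [Finset.filter_filter]
  congr 1
  refine Finset.filter_congr fun l _ => ?_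
  simp only [Finset.mem_range] at hi
  constructor
  · exact fun h => h.2
  · rintro rfl; exact ⟨by omega, rfl⟩

lemma card_fiber132_succ {n j : ℕ} (hj : j ≤ n) :
    ((avoiders Is132 (n + 1)).filter (bound132 · = j)).card =
      ((avoiders Is132 n).filter (bound132 · ≤ j)).card := by
  symm
  refine Finset.card_nbij (prepend j) (fun t ht => ?_) (fun t _ t' _ h => (prepend_inj.mp h).2)
    fun l hl => ?_
  · obtain ⟨ht, hb⟩ := Finset.mem_filter.mp ht
    refine Finset.mem_filter.mpr ⟨(mem_avoiders_succ_iff not_contains_is132_prepend_iff).mpr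
      ⟨j, hj, t, ht, hb, rfl⟩, bound132_prepend hj (mem_avoiders.mp ht).1 hb⟩
  · obtain ⟨hmem, rfl⟩ := Finset.mem_filter.mp hl
    obtain ⟨k, hk, t, ht, hb, rfl⟩ := (mem_avoiders_succ_iff not_contains_is132_prepend_iff).mp hmem
    rw [bound132_prepend hk (mem_avoiders.mp ht).1 hb]
    exact ⟨t, Finset.mem_filter.mpr ⟨ht, hb⟩, rfl⟩

lemma card_fiber123_succ {n j : ℕ} (hj : j ≤ n) :
    ((avoiders Is123 (n + 1)).filter (bound123 · = j)).card =
      ((avoiders Is123 n).filter (bound123 · ≤ j)).card := by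
  symm
  -- The unique child of `t` with statistic `j` is obtained by prepending `j - 1` if
  -- `bound123 t < j`, and by prepending the maximum `n` if `bound123 t = j`.
  let head (t : List ℕ) : ℕ := if bound123 t < j then j - 1 else n
  have hhead {t} (ht : t ∈ avoiders Is123 n) (hb : bound123 t ≤ j) :
      bound123 t ≤ head t ∧ head t ≤ n ∧ bound123 (prepend (head t) t) = j := by
    have hkb : bound123 t ≤ head t := by simp only [head]; split_ifs <;> omega
    have hkn : head t ≤ n := by simp only [head]; split_ifs <;> omega
    refine ⟨hkb, hkn, ?_⟩
    rw [bound123_prepend hkn (mem_avoiders.mp ht).1 hkb]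
    simp only [head]
    split_ifs <;> omega
  refine Finset.card_nbij (fun t => prepend (head t) t) (fun t ht => ?_) (fun t ht t' ht' h => ?_)
    fun l hl => ?_
  · obtain ⟨ht, hb⟩ := Finset.mem_filter.mp ht
    obtain ⟨h1, h2, h3⟩ := hhead ht hb
    exact Finset.mem_filter.mpr ⟨(mem_avoiders_succ_iff not_contains_is123_prepend_iff).mpr
      ⟨head t, h2, t, ht, h1, rfl⟩, h3⟩
  · exact (prepend_inj.mp h).2
  · obtain ⟨hmem, rfl⟩ := Finset.mem_filter.mp hl
    obtain ⟨k, hk, t, ht, hb, rfl⟩ := (mem_avoiders_succ_iff not_contains_is123_prepend_iff).mp hmem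
    have hbk := bound123_prepend hk (mem_avoiders.mp ht).1 hb
    refine ⟨t, Finset.mem_filter.mpr ⟨ht, ?_⟩, ?_⟩
    · split_ifs at hbk <;> omega
    · show prepend (head t) t = prepend k t
      congr 1
      simp only [head]
      split_ifs at hbk ⊢ <;> omega

lemma card_fiber_eq_ballot {R : ℕ → ℕ → ℕ → Prop} {s : List ℕ → ℕ} (hs0 : s [] = 0)
    (hs : ∀ {n l}, l ∈ avoiders R (n + 1) → s l ≤ n)
    (hrec : ∀ {n j}, j ≤ n → ((avoiders R (n + 1)).filter (s · = j)).card =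
      ((avoiders R n).filter (s · ≤ j)).card) (n j : ℕ) :
    ((avoiders R n).filter (s · = j)).card = ballot n j := by
  induction n generalizing j with
  | zero =>
    rw [avoiders_zero]
    rcases eq_or_ne j 0 with rfl | hj
    · simp [ballot, Finset.filter_singleton, hs0]
    · simp [ballot, Finset.filter_singleton, hs0, hj, hj.symm]
  | succ n ih =>
    by_cases hj : j ≤ n
    · rw [hrec hj, card_filter_le_eq_sum, ballot_succ_of_le hj]
      exact Finset.sum_congr rfl fun i _ => ih i
    · rw [ballot, if_neg hj, Finset.card_eq_zero, Finset.filter_eq_empty_iff]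
      exact fun l hl hlj => hj (hlj ▸ hs hl)

lemma card_avoiders_eq_catalan {R : ℕ → ℕ → ℕ → Prop} {s : List ℕ → ℕ} (hs0 : s [] = 0)
    (hs : ∀ {n l}, l ∈ avoiders R (n + 1) → s l ≤ n)
    (hrec : ∀ {n j}, j ≤ n → ((avoiders R (n + 1)).filter (s · = j)).card =
      ((avoiders R n).filter (s · ≤ j)).card) (n : ℕ) :
    (avoiders R n).card = catalan n := by
  have hall : (avoiders R n).filter (s · ≤ n) = avoiders R n := by
    refine Finset.filter_true_of_mem fun l hl => ?_
    rcases n with _ | n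
    · simp [avoiders_zero] at hl
      simp [hl, hs0]
    · exact (hs hl).trans n.le_succ
  rw [← hall, card_filter_le_eq_sum, ← sum_ballot]
  exact Finset.sum_congr rfl fun j _ => card_fiber_eq_ballot hs0 hs hrec n j

lemma bound132_le {n : ℕ} {l : List ℕ} (hl : l ∈ avoiders Is132 (n + 1)) : bound132 l ≤ n := by
  refine bound132_le_iff.mpr fun x ⟨b, h, hxb⟩ => ?_
  have := (mem_avoiders.mp hl).1.subset (h.subset (by simp : b ∈ [b, x]))
  simp only [mem_range] at this
  omega

lemma bound123_le {n : ℕ} {l : List ℕ} (hl : l ∈ avoiders Is123 (n + 1)) : bound123 l ≤ n := by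
  refine bound123_le_iff.mpr fun x ⟨c, h, hxc⟩ => ?_
  have := (mem_avoiders.mp hl).1.subset (h.subset (by simp : c ∈ [x, c]))
  simp only [mem_range] at this
  omega

lemma card_avoiders_is132 (n : ℕ) : (avoiders Is132 n).card = catalan n :=
  card_avoiders_eq_catalan (s := bound132) (by simp [bound132, bound]) bound132_le
    card_fiber132_succ n

lemma card_avoiders_is123 (n : ℕ) : (avoiders Is123 n).card = catalan n :=
  card_avoiders_eq_catalan (s := bound123) (by simp [bound123, bound]) bound123_le
    card_fiber123_succ n

lemma card_bijective_avoids_p132 (n : ℕ) :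
    Nat.card {π : Fin n → Fin n // Bijective π ∧ Avoids p132 π} = catalan n :=
  (card_bijective_avoids_eq_card_avoiders (fun hπ _ => isOcc_p132_iff hπ) n).trans
    (card_avoiders_is132 n)

lemma card_bijective_avoids_p123 (n : ℕ) :
    Nat.card {π : Fin n → Fin n // Bijective π ∧ Avoids p123 π} = catalan n :=
  (card_bijective_avoids_eq_card_avoiders (fun hπ _ => isOcc_p123_iff hπ) n).trans
    (card_avoiders_is123 n)

lemma eq_pattern_of_bijective (τ : Fin 3 → Fin 3) (hτ : Bijective τ) :
    τ = p123 ∨ τ = p132 ∨ τ = p213 ∨ τ = p231 ∨ τ = p312 ∨ τ = p321 := by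
  revert τ
  decide

lemma card_bijective_avoids_eq_catalan (τ : Fin 3 → Fin 3) (hτ : Bijective τ) (n : ℕ) :
    Nat.card {π : Fin n → Fin n // Bijective π ∧ Avoids τ π} = catalan n := by
  rcases eq_pattern_of_bijective τ hτ with rfl | rfl | rfl | rfl | rfl | rfl
  · exact card_bijective_avoids_p123 n
  · exact card_bijective_avoids_p132 n
  · rw [show p213 = Fin.rev ∘ p132 ∘ Fin.rev by decide, card_bijective_avoids_rev_comp,
      card_bijective_avoids_comp_rev, card_bijective_avoids_p132]
  · rw [show p231 = p132 ∘ Fin.rev by decide, card_bijective_avoids_comp_rev,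
      card_bijective_avoids_p132]
  · rw [show p312 = Fin.rev ∘ p132 by decide, card_bijective_avoids_rev_comp,
      card_bijective_avoids_p132]
  · rw [show p321 = p123 ∘ Fin.rev by decide, card_bijective_avoids_comp_rev,
      card_bijective_avoids_p123]

end PatternAvoidance

/-- for every pattern `τ ∈ S₃`, the number of `τ`-avoiding permutations of
length `n` is the Catalan number `C(2n, n)/(n+1)`. -/
theorem stmt0 (τ : Fin 3 → Fin 3) (hτ : Function.Bijective τ) (n : ℕ) :
    Nat.card {π : Fin n → Fin n // Function.Bijective π ∧ Avoids τ π} =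
      (2 * n).choose n / (n + 1) := by
  rw [← Nat.centralBinom_eq_two_mul_choose, ← catalan_eq_centralBinom_div]
  exact PatternAvoidance.card_bijective_avoids_eq_catalan τ hτ n
end

section
/- The generating function for the number of permutations of length n avoiding both 123 and 132 and containing the pattern 213 exactly once is x³/(1−x−x²)², i.e. |Sₙ(123,132;213)| equals the coefficient of xⁿ in x³/(1−x−x²)². -/
/-!
A permutation avoiding `123` and `132` whose maximum sits at position `p` is forced to be
`(m+p-1, …, m+1, m, m+p)` followed by a permutation `σ` of `{0, …, m-1}` from the same class:
a `123` would otherwise end at the maximum, and a `132` would have the maximum in the middle.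
Its `213`-occurrences are those of `σ` together with the pairs of the decreasing prefix closed
by the maximum; so it avoids `213` iff `p ≤ 1` and `σ` does, and contains `213` once iff either
`p = 2` and `σ` avoids it, or `p ≤ 1` and `σ` contains it once. Summing over `p`, the numbers
`gₙ` of class members avoiding `213` and `aₙ` of those containing it once satisfy
`gₙ₊₂ = gₙ₊₁ + gₙ` and `aₙ₊₃ = aₙ₊₂ + aₙ₊₁ + gₙ`, that is `(1 - x - x²) G = 1` and
`(1 - x - x²) A = x³ G`.
-/

namespace PermPattern

open Finset Function

lemma isOcc_p123_iff {n : ℕ} (π : Fin n → Fin n) (f : Fin 3 → Fin n) :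
    IsOcc p123 π f ↔ f 0 < f 1 ∧ f 1 < f 2 ∧ π (f 0) < π (f 1) ∧ π (f 1) < π (f 2) := by
  simp only [IsOcc, Fin.strictMono_iff_lt_succ, Fin.forall_fin_succ, IsEmpty.forall_iff, p123,
    Fin.succ_zero_eq_one, Fin.succ_one_eq_two, Fin.castSucc_zero, Fin.castSucc_one,
    Matrix.cons_val_zero, Matrix.cons_val_one, Matrix.cons_val_two, Matrix.tail_cons,
    Matrix.head_cons]
  grind

lemma isOcc_p132_iff {n : ℕ} (π : Fin n → Fin n) (f : Fin 3 → Fin n) :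
    IsOcc p132 π f ↔ f 0 < f 1 ∧ f 1 < f 2 ∧ π (f 0) < π (f 2) ∧ π (f 2) < π (f 1) := by
  simp only [IsOcc, Fin.strictMono_iff_lt_succ, Fin.forall_fin_succ, IsEmpty.forall_iff, p132,
    Fin.succ_zero_eq_one, Fin.succ_one_eq_two, Fin.castSucc_zero, Fin.castSucc_one,
    Matrix.cons_val_zero, Matrix.cons_val_one, Matrix.cons_val_two, Matrix.tail_cons,
    Matrix.head_cons]
  grind

lemma isOcc_p213_iff {n : ℕ} (π : Fin n → Fin n) (f : Fin 3 → Fin n) :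
    IsOcc p213 π f ↔ f 0 < f 1 ∧ f 1 < f 2 ∧ π (f 1) < π (f 0) ∧ π (f 0) < π (f 2) := by
  simp only [IsOcc, Fin.strictMono_iff_lt_succ, Fin.forall_fin_succ, IsEmpty.forall_iff, p213,
    Fin.succ_zero_eq_one, Fin.succ_one_eq_two, Fin.castSucc_zero, Fin.castSucc_one,
    Matrix.cons_val_zero, Matrix.cons_val_one, Matrix.cons_val_two, Matrix.tail_cons,
    Matrix.head_cons]
  grind

lemma avoids_of_lt {k n : ℕ} (τ : Fin k → Fin k) (π : Fin n → Fin n) (h : n < k) :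
    Avoids τ π := fun ⟨f, hf⟩ => by
  have := Fintype.card_le_of_injective f hf.1.injective
  simp only [Fintype.card_fin] at this
  omega

/-- The permutation `(m+p-1, …, m+1, m, m+p) ++ σ` of `Fin (m+p+1)`. -/
def prefixMax (m p : ℕ) (σ : Fin m → Fin m) (i : Fin (m + p + 1)) : Fin (m + p + 1) :=
  if h : p < (i : ℕ) then Fin.castLE (by omega) (σ ⟨i - p - 1, by omega⟩)
  else if (i : ℕ) = p then Fin.last (m + p)
  else ⟨m + p - 1 - i, by omega⟩

def tailPos (m p : ℕ) (j : Fin m) : Fin (m + p + 1) := ⟨p + 1 + j, by omega⟩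

section prefixMax

variable {m p : ℕ}

lemma val_prefixMax (σ : Fin m → Fin m) (i : Fin (m + p + 1)) :
    ((i : ℕ) < p → (prefixMax m p σ i : ℕ) = m + p - 1 - i) ∧
    ((i : ℕ) = p → (prefixMax m p σ i : ℕ) = m + p) ∧
    (p < (i : ℕ) → (prefixMax m p σ i : ℕ) < m) := by
  refine ⟨fun h => ?_, fun h => by simp [prefixMax, h], fun h => by simp [prefixMax, h]⟩
  simp [prefixMax, show ¬ p < (i : ℕ) by omega, show (i : ℕ) ≠ p by omega]

lemma prefixMax_tailPos (σ : Fin m → Fin m) (j : Fin m) :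
    prefixMax m p σ (tailPos m p j) = Fin.castLE (by omega) (σ j) := by
  rw [prefixMax, dif_pos (show p < (tailPos m p j : ℕ) by simp only [tailPos]; omega)]
  congr
  simp only [tailPos]
  omega

lemma tailPos_strictMono : StrictMono (tailPos m p) := fun a b h => by
  simp only [tailPos, Fin.mk_lt_mk]
  omega

lemma exists_tailPos_eq {i : Fin (m + p + 1)} (h : p < (i : ℕ)) : ∃ j, tailPos m p j = i :=
  ⟨⟨i - p - 1, by omega⟩, Fin.ext (show p + 1 + (i - p - 1) = (i : ℕ) by omega)⟩

lemma prefixMax_injective {σ : Fin m → Fin m} (hσ : Injective σ) :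
    Injective (prefixMax m p σ) := by
  intro i i' h
  by_cases hi : p < (i : ℕ) ∧ p < (i' : ℕ)
  · obtain ⟨j, rfl⟩ := exists_tailPos_eq hi.1
    obtain ⟨j', rfl⟩ := exists_tailPos_eq hi.2
    rw [prefixMax_tailPos, prefixMax_tailPos] at h
    exact congrArg _ (hσ (Fin.castLE_injective _ h))
  · have := val_prefixMax σ i
    have := val_prefixMax σ i'
    have := congrArg Fin.val h
    ext
    omega

lemma prefixMax_bijective {σ : Fin m → Fin m} (hσ : Bijective σ) :
    Bijective (prefixMax m p σ) :=
  Finite.injective_iff_bijective.mp (prefixMax_injective hσ.injective)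

lemma prefixMax_left_injective : Injective (prefixMax m p) := fun σ σ' h => funext fun j =>
  Fin.castLE_injective (show m ≤ m + p + 1 by omega) <| by
    rw [← prefixMax_tailPos, ← prefixMax_tailPos, h]

lemma exists_isOcc_tailPos_comp_iff {k : ℕ} (τ : Fin k → Fin k) (σ : Fin m → Fin m)
    (f : Fin k → Fin (m + p + 1)) :
    (∃ g, IsOcc τ σ g ∧ f = tailPos m p ∘ g) ↔
      IsOcc τ (prefixMax m p σ) f ∧ ∀ t, p < (f t : ℕ) := by
  constructor
  · rintro ⟨g, hg, rfl⟩
    refine ⟨⟨tailPos_strictMono.comp hg.1, fun i j => ?_⟩, fun t => ?_⟩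
    · simp only [comp_apply, prefixMax_tailPos, Fin.castLE_lt_castLE_iff, hg.2]
    · simp only [comp_apply, tailPos]
      omega
  · rintro ⟨hf, hp⟩
    choose g hg using fun t => exists_tailPos_eq (hp t)
    obtain rfl : f = tailPos m p ∘ g := funext fun t => (hg t).symm
    refine ⟨g, ⟨fun a b h => tailPos_strictMono.lt_iff_lt.1 (hf.1 h), fun i j => ?_⟩, rfl⟩
    simpa [prefixMax_tailPos] using hf.2 i j

variable {σ : Fin m → Fin m}

/-- An entry of `(m+p-1, …, m, m+p)` is exceeded by at most one later entry, the maximum, so a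
pattern whose first entry lies below two later ones must start after the maximum. -/
lemma lt_of_isOcc_prefixMax {τ : Fin 3 → Fin 3} (h₁ : τ 0 < τ 1) (h₂ : τ 0 < τ 2)
    {f : Fin 3 → Fin (m + p + 1)} (hf : IsOcc τ (prefixMax m p σ) f) (t : Fin 3) :
    p < (f t : ℕ) := by
  suffices p < (f 0 : ℕ) from this.trans_le (hf.1.monotone (Fin.zero_le t))
  have := (hf.2 0 1).1 h₁
  have := (hf.2 0 2).1 h₂
  have := hf.1 (show (0 : Fin 3) < 1 by decide)
  have := hf.1 (show (1 : Fin 3) < 2 by decide)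
  have := val_prefixMax σ (f 0)
  have := val_prefixMax σ (f 1)
  have := val_prefixMax σ (f 2)
  omega

lemma avoids_prefixMax_iff {τ : Fin 3 → Fin 3} (h₁ : τ 0 < τ 1) (h₂ : τ 0 < τ 2) :
    Avoids τ (prefixMax m p σ) ↔ Avoids τ σ := by
  refine not_congr ⟨fun ⟨f, hf⟩ => ?_, fun ⟨g, hg⟩ => ?_⟩
  · obtain ⟨g, hg, -⟩ :=
      (exists_isOcc_tailPos_comp_iff τ σ f).2 ⟨hf, lt_of_isOcc_prefixMax h₁ h₂ hf⟩
    exact ⟨g, hg⟩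
  · exact ⟨_, ((exists_isOcc_tailPos_comp_iff τ σ _).1 ⟨g, hg, rfl⟩).1⟩

lemma isOcc_p213_prefixMax_iff (f : Fin 3 → Fin (m + p + 1)) :
    IsOcc p213 (prefixMax m p σ) f ↔
      (f 0 < f 1 ∧ (f 1 : ℕ) < p ∧ (f 2 : ℕ) = p) ∨
        ∃ g, IsOcc p213 σ g ∧ f = tailPos m p ∘ g := by
  rw [exists_isOcc_tailPos_comp_iff]
  have := val_prefixMax σ (f 0)
  have := val_prefixMax σ (f 1)
  have := val_prefixMax σ (f 2)
  simp only [isOcc_p213_iff, Fin.forall_fin_succ, Fin.succ_zero_eq_one, Fin.succ_one_eq_two,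
    IsEmpty.forall_iff, and_true]
  omega

end prefixMax

lemma existsUnique_or_iff {α : Sort*} {A B : α → Prop} (h : ∀ x, A x → ¬ B x) :
    (∃! x, A x ∨ B x) ↔ (∃! x, A x) ∧ (¬ ∃ x, B x) ∨ (¬ ∃ x, A x) ∧ ∃! x, B x := by
  simp only [ExistsUnique]
  grind

lemma _root_.Function.Injective.existsUnique_exists_and_eq_iff {α β : Sort*} {P : α → Prop}
    {h : α → β} (hh : Injective h) : (∃! y, ∃ x, P x ∧ y = h x) ↔ ∃! x, P x := by
  constructor
  · rintro ⟨_, ⟨x, hx, rfl⟩, hu⟩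
    exact ⟨x, hx, fun x' hx' => hh (hu _ ⟨x', hx', rfl⟩)⟩
  · rintro ⟨x, hx, hu⟩
    exact ⟨h x, ⟨x, hx, rfl⟩, fun _ ⟨x', hx', e⟩ => e ▸ congrArg h (hu x' hx')⟩

lemma exists_lt_lt_eq_iff {N p : ℕ} (hp : p < N) :
    (∃ f : Fin 3 → Fin N, f 0 < f 1 ∧ (f 1 : ℕ) < p ∧ (f 2 : ℕ) = p) ↔ 2 ≤ p := by
  refine ⟨fun ⟨f, h01, h1, _⟩ => by omega, fun h => ?_⟩
  exact ⟨![⟨0, by omega⟩, ⟨1, by omega⟩, ⟨p, hp⟩], show 0 < 1 ∧ 1 < p ∧ p = p by omega⟩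

lemma existsUnique_lt_lt_eq_iff {N p : ℕ} (hp : p < N) :
    (∃! f : Fin 3 → Fin N, f 0 < f 1 ∧ (f 1 : ℕ) < p ∧ (f 2 : ℕ) = p) ↔ p = 2 := by
  constructor
  · rintro ⟨f, ⟨h01, h1, -⟩, huniq⟩
    by_contra hne
    have e₁ := huniq ![⟨0, by omega⟩, ⟨1, by omega⟩, ⟨p, hp⟩] (show 0 < 1 ∧ 1 < p ∧ p = p by omega)
    have e₂ := huniq ![⟨0, by omega⟩, ⟨2, by omega⟩, ⟨p, hp⟩] (show 0 < 2 ∧ 2 < p ∧ p = p by omega)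
    simpa using congrArg (fun f => (f 1 : ℕ)) (e₁.trans e₂.symm)
  · rintro rfl
    refine ⟨![⟨0, by omega⟩, ⟨1, by omega⟩, ⟨2, hp⟩], by simp [Fin.lt_def], fun f hf => ?_⟩
    funext t
    fin_cases t <;> ext <;> simp <;> omega

section p213

variable {m p : ℕ} {σ : Fin m → Fin m}

lemma avoids_p213_prefixMax_iff : Avoids p213 (prefixMax m p σ) ↔ p ≤ 1 ∧ Avoids p213 σ := by
  simp [Avoids, isOcc_p213_prefixMax_iff, exists_or,
    exists_lt_lt_eq_iff (show p < m + p + 1 by omega)]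

lemma containsOnce_p213_prefixMax_iff :
    ContainsOnce p213 (prefixMax m p σ) ↔
      (p = 2 ∧ Avoids p213 σ) ∨ (p ≤ 1 ∧ ContainsOnce p213 σ) := by
  have hp : p < m + p + 1 := by omega
  have hdisj (f : Fin 3 → Fin (m + p + 1)) : f 0 < f 1 ∧ (f 1 : ℕ) < p ∧ (f 2 : ℕ) = p →
      ¬ ∃ g, IsOcc p213 σ g ∧ f = tailPos m p ∘ g := by
    rintro ⟨-, -, h2⟩ ⟨g, -, rfl⟩
    simp only [comp_apply, tailPos] at h2
    omega
  simp only [ContainsOnce, isOcc_p213_prefixMax_iff]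
  rw [existsUnique_or_iff hdisj, existsUnique_lt_lt_eq_iff hp, exists_lt_lt_eq_iff hp,
    tailPos_strictMono.injective.comp_left.existsUnique_exists_and_eq_iff]
  simp [Avoids]

end p213

section decomposition

variable {n : ℕ} {π : Fin (n + 1) → Fin (n + 1)}

lemma apply_lt_of_lt_of_lt_max (hπ : Injective π) (h123 : Avoids p123 π) {P : Fin (n + 1)}
    (hP : π P = Fin.last n) {a b : Fin (n + 1)} (hab : a < b) (hbP : b < P) : π b < π a := by
  by_contra h
  have hb := (hπ.ne hbP.ne).lt_of_le (hP ▸ Fin.le_last (π b))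
  refine h123 ⟨![a, b, P], (isOcc_p123_iff π _).2 ?_⟩
  simp only [Matrix.cons_val_zero, Matrix.cons_val_one, Matrix.cons_val_two, Matrix.head_cons,
    Matrix.tail_cons]
  exact ⟨hab, hbP, (hπ.ne hab.ne).lt_of_le (not_lt.1 h), hb⟩

lemma apply_lt_of_lt_max_lt (hπ : Injective π) (h132 : Avoids p132 π) {P : Fin (n + 1)}
    (hP : π P = Fin.last n) {a c : Fin (n + 1)} (haP : a < P) (hPc : P < c) : π c < π a := by
  by_contra h
  have hc := (hπ.ne hPc.ne').lt_of_le (hP ▸ Fin.le_last (π c))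
  refine h132 ⟨![a, P, c], (isOcc_p132_iff π _).2 ?_⟩
  simp only [Matrix.cons_val_zero, Matrix.cons_val_one, Matrix.cons_val_two, Matrix.head_cons,
    Matrix.tail_cons]
  exact ⟨haP, hPc, (hπ.ne (haP.trans hPc).ne).lt_of_le (not_lt.1 h), hc⟩

lemma val_apply_eq_card_lt {N : ℕ} {π : Fin N → Fin N} (hπ : Bijective π) (a : Fin N) :
    (π a : ℕ) = #{c | π c < π a} := by
  rw [← Fin.card_Iio (π a)]
  symm
  refine card_nbij π (fun c hc => by simpa using hc) hπ.1.injOn fun v hv => ?_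
  obtain ⟨c, rfl⟩ := hπ.2 v
  exact ⟨c, by simpa using hv, rfl⟩

lemma val_apply_of_lt_max (hπ : Bijective π) (h123 : Avoids p123 π) (h132 : Avoids p132 π)
    {P : Fin (n + 1)} (hP : π P = Fin.last n) {a : Fin (n + 1)} (ha : a < P) :
    (π a : ℕ) = n - 1 - a := by
  have hlt (c : Fin (n + 1)) : π c < π a ↔ c ∈ (Ioi a).erase P := by
    simp only [mem_erase, mem_Ioi]
    constructor
    · intro h
      refine ⟨fun hcP => ?_, lt_of_not_ge fun hca => ?_⟩
      · rw [hcP, hP] at h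
        exact not_lt.2 (Fin.le_last _) h
      · rcases hca.lt_or_eq with hca | rfl
        · exact lt_asymm h (apply_lt_of_lt_of_lt_max hπ.1 h123 hP hca ha)
        · exact lt_irrefl _ h
    · rintro ⟨hcP, hac⟩
      rcases lt_or_gt_of_ne hcP with hcP | hcP
      · exact apply_lt_of_lt_of_lt_max hπ.1 h123 hP hac hcP
      · exact apply_lt_of_lt_max_lt hπ.1 h132 hP ha hcP
  rw [val_apply_eq_card_lt hπ, filter_congr fun c _ => hlt c, filter_mem_eq_inter, univ_inter,
    card_erase_of_mem (mem_Ioi.2 ha), Fin.card_Ioi]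
  omega

/-- The values before the maximum fill `{n - P, …, n}`, so whatever follows it lies below. -/
lemma val_apply_lt_of_max_lt (hπ : Bijective π) (h123 : Avoids p123 π) (h132 : Avoids p132 π)
    {P : Fin (n + 1)} (hP : π P = Fin.last n) {c : Fin (n + 1)} (hc : P < c) :
    (π c : ℕ) < n - P := by
  by_contra hle
  have hcn : (π c : ℕ) ≠ n := fun h => hc.ne' (hπ.1 (by rw [hP]; ext; simpa using h))
  set a : Fin (n + 1) := ⟨n - 1 - π c, by omega⟩
  have ha : a < P := show n - 1 - (π c : ℕ) < P by omega
  have hac : π a = π c := by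
    ext
    rw [val_apply_of_lt_max hπ h123 h132 hP ha]
    simp only [a]
    omega
  exact (ha.trans hc).ne (hπ.1 hac)

lemma exists_eq_prefixMax {m p : ℕ} {π : Fin (m + p + 1) → Fin (m + p + 1)} (hπ : Bijective π)
    (h123 : Avoids p123 π) (h132 : Avoids p132 π) (hmax : π ⟨p, by omega⟩ = Fin.last (m + p)) :
    ∃ σ, Bijective σ ∧ π = prefixMax m p σ := by
  have htail (j : Fin m) : (π (tailPos m p j) : ℕ) < m := by
    simpa using val_apply_lt_of_max_lt hπ h123 h132 hmax (c := tailPos m p j)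
      (show p < p + 1 + (j : ℕ) by omega)
  set σ : Fin m → Fin m := fun j => ⟨π (tailPos m p j), htail j⟩
  refine ⟨σ, Finite.injective_iff_bijective.mp fun j j' h => ?_, funext fun i => ?_⟩
  · exact tailPos_strictMono.injective (hπ.1 (Fin.ext (Fin.mk.inj h)))
  have := val_prefixMax σ i
  rcases lt_trichotomy (i : ℕ) p with hi | hi | hi
  · ext
    rw [this.1 hi, val_apply_of_lt_max hπ h123 h132 hmax (a := i) hi]
  · ext
    rw [this.2.1 hi, show i = ⟨p, by omega⟩ from Fin.ext hi, hmax, Fin.val_last]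
  · obtain ⟨j, rfl⟩ := exists_tailPos_eq hi
    rw [prefixMax_tailPos]
    rfl

end decomposition

section counting

noncomputable def classCount (R : ∀ n, (Fin n → Fin n) → Prop) (n : ℕ) : ℕ :=
  Nat.card {π : Fin n → Fin n // Bijective π ∧ Avoids p123 π ∧ Avoids p132 π ∧ R n π}

lemma card_eq_sum_card_apply_eq_last {k : ℕ} (Q : (Fin (k + 1) → Fin (k + 1)) → Prop)
    (hQ : ∀ π, Q π → Bijective π) :
    Nat.card {π // Q π} = ∑ P : Fin (k + 1), Nat.card {π // Q π ∧ π P = Fin.last k} := by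
  let maxPos (π : {π // Q π}) : Fin (k + 1) :=
    (Equiv.ofBijective _ (hQ _ π.2)).symm (Fin.last k)
  rw [← Nat.card_congr (Equiv.sigmaFiberEquiv maxPos), Nat.card_sigma]
  refine sum_congr rfl fun P _ => Nat.card_congr
    { toFun := fun π => ⟨π.1.1, π.1.2, ?_⟩
      invFun := fun π => ⟨⟨π.1, π.2.1⟩, ?_⟩
      left_inv := fun _ => rfl
      right_inv := fun _ => rfl }
  · obtain ⟨π, rfl⟩ := π
    exact (Equiv.ofBijective _ (hQ _ π.2)).apply_symm_apply _
  · exact (Equiv.symm_apply_eq _).2 π.2.2.symm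

lemma card_apply_eq_last_eq_card_prefixMax (R : ∀ n, (Fin n → Fin n) → Prop) (m p : ℕ) :
    Nat.card {π : Fin (m + p + 1) → Fin (m + p + 1) //
        (Bijective π ∧ Avoids p123 π ∧ Avoids p132 π ∧ R _ π) ∧
          π ⟨p, by omega⟩ = Fin.last _} =
      Nat.card {σ : Fin m → Fin m //
        Bijective σ ∧ Avoids p123 σ ∧ Avoids p132 σ ∧ R _ (prefixMax m p σ)} := by
  have h123 (σ : Fin m → Fin m) :=
    avoids_prefixMax_iff (σ := σ) (p := p) (τ := p123) (by decide) (by decide)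
  have h132 (σ : Fin m → Fin m) :=
    avoids_prefixMax_iff (σ := σ) (p := p) (τ := p132) (by decide) (by decide)
  symm
  refine Nat.card_eq_of_bijective
    (fun σ => ⟨prefixMax m p σ.1,
      ⟨prefixMax_bijective σ.2.1, (h123 _).2 σ.2.2.1, (h132 _).2 σ.2.2.2.1, σ.2.2.2.2⟩,
      by ext; simp [(val_prefixMax σ.1 _).2.1]⟩)
    ⟨fun σ σ' h => ?_, fun π => ?_⟩
  · exact Subtype.ext (prefixMax_left_injective (congrArg Subtype.val h))
  · obtain ⟨π, ⟨hπ, hπ123, hπ132, hR⟩, hmax⟩ := π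
    obtain ⟨σ, hσ, rfl⟩ := exists_eq_prefixMax hπ hπ123 hπ132 hmax
    exact ⟨⟨σ, hσ, (h123 σ).1 hπ123, (h132 σ).1 hπ132, hR⟩, rfl⟩

lemma classCount_succ (R : ∀ n, (Fin n → Fin n) → Prop) (k : ℕ) :
    classCount R (k + 1) = ∑ p ∈ range (k + 1), Nat.card {σ : Fin (k - p) → Fin (k - p) //
      Bijective σ ∧ Avoids p123 σ ∧ Avoids p132 σ ∧ R _ (prefixMax (k - p) p σ)} := by
  rw [classCount, card_eq_sum_card_apply_eq_last _ fun _ h => h.1, ← Fin.sum_univ_eq_sum_range]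
  refine sum_congr rfl fun ⟨p, hp⟩ _ => ?_
  obtain ⟨m, rfl⟩ : ∃ m, k = m + p := ⟨k - p, by omega⟩
  rw [Nat.add_sub_cancel]
  exact card_apply_eq_last_eq_card_prefixMax R m p

local notation "avoiders" => classCount fun _ => Avoids p213
local notation "onceContainers" => classCount fun _ => ContainsOnce p213

lemma classCount_avoids_p213_succ (k : ℕ) :
    avoiders (k + 1) = ∑ p ∈ range (k + 1), if p ≤ 1 then avoiders (k - p) else 0 := by
  rw [classCount_succ]
  refine sum_congr rfl fun p _ => ?_
  simp only [avoids_p213_prefixMax_iff]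
  split_ifs with hp
  · exact Nat.card_congr (Equiv.subtypeEquivRight fun σ => by tauto)
  · exact Nat.card_eq_zero.2 (.inl ⟨by rintro ⟨σ, -, -, -, h, -⟩; exact hp h⟩)

lemma classCount_containsOnce_p213_succ (k : ℕ) :
    onceContainers (k + 1) = ∑ p ∈ range (k + 1),
      if p ≤ 1 then onceContainers (k - p) else if p = 2 then avoiders (k - p) else 0 := by
  rw [classCount_succ]
  refine sum_congr rfl fun p _ => ?_
  simp only [containsOnce_p213_prefixMax_iff]
  split_ifs with h₁ h₂
  · have : p ≠ 2 := by omega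
    exact Nat.card_congr (Equiv.subtypeEquivRight fun σ => by tauto)
  · have : ¬ p ≤ 1 := by omega
    exact Nat.card_congr (Equiv.subtypeEquivRight fun σ => by tauto)
  · exact Nat.card_eq_zero.2 (.inl ⟨by rintro ⟨σ, -, -, -, ⟨h, -⟩ | ⟨h, -⟩⟩ <;> omega⟩)

lemma classCount_avoids_p213_zero : avoiders 0 = 1 :=
  Nat.card_eq_one_iff_unique.2 ⟨inferInstance,
    ⟨⟨id, bijective_id, avoids_of_lt _ _ (by norm_num), avoids_of_lt _ _ (by norm_num),
      avoids_of_lt _ _ (by norm_num)⟩⟩⟩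

lemma classCount_avoids_p213_one : avoiders 1 = 1 := by
  rw [classCount_avoids_p213_succ, sum_range_one, if_pos zero_le_one,
    classCount_avoids_p213_zero]

lemma classCount_avoids_p213_add_two (n : ℕ) :
    avoiders (n + 2) = avoiders (n + 1) + avoiders n := by
  rw [classCount_avoids_p213_succ, sum_range_succ', sum_range_succ',
    sum_eq_zero fun i _ => if_neg (by omega)]
  simp [add_comm]

lemma classCount_containsOnce_p213_zero : onceContainers 0 = 0 :=
  Nat.card_eq_zero.2
    (.inl ⟨fun ⟨π, _, _, _, f, hf, _⟩ => avoids_of_lt p213 π (by norm_num) ⟨f, hf⟩⟩)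

lemma classCount_containsOnce_p213_add_three (n : ℕ) :
    onceContainers (n + 3) = onceContainers (n + 2) + onceContainers (n + 1) + avoiders n := by
  rw [classCount_containsOnce_p213_succ, sum_range_succ', sum_range_succ', sum_range_succ',
    sum_eq_zero fun i _ => by rw [if_neg (by omega), if_neg (by omega)]]
  simp [add_comm, add_assoc]

open PowerSeries

lemma coeff_one_sub_X_sub_X_sq_mul {R : Type*} [CommRing R] (f : R⟦X⟧) (n : ℕ) :
    coeff (n + 2) ((1 - X - X ^ 2) * f) = coeff (n + 2) f - coeff (n + 1) f - coeff n f := by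
  simp [sub_mul, coeff_X_pow_mul', coeff_succ_X_mul]

lemma one_sub_X_sub_X_sq_mul_avoiders :
    (1 - X - X ^ 2 : ℚ⟦X⟧) * PowerSeries.mk (fun n => (avoiders n : ℚ)) = 1 := by
  ext n
  rcases n with _ | _ | n
  · simp [classCount_avoids_p213_zero]
  · simp [sub_mul, coeff_succ_X_mul, coeff_X_pow_mul', classCount_avoids_p213_one,
      classCount_avoids_p213_zero]
  · simp [coeff_one_sub_X_sub_X_sq_mul, classCount_avoids_p213_add_two]

lemma one_sub_X_sub_X_sq_mul_onceContainers :
    (1 - X - X ^ 2 : ℚ⟦X⟧) * PowerSeries.mk (fun n => (onceContainers n : ℚ)) =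
      X ^ 3 * PowerSeries.mk (fun n => (avoiders n : ℚ)) := by
  ext n
  rcases n with _ | _ | _ | n
  · simp [classCount_containsOnce_p213_zero]
  · simp [sub_mul, coeff_succ_X_mul, coeff_X_pow_mul', classCount_containsOnce_p213_succ 0,
      classCount_containsOnce_p213_zero]
  · simp [coeff_one_sub_X_sub_X_sq_mul, classCount_containsOnce_p213_succ 1,
      classCount_containsOnce_p213_succ 0, classCount_containsOnce_p213_zero, coeff_X_pow_mul',
      sum_range_succ]
  · show coeff (n + 3) _ = coeff (n + 3) _
    simp only [coeff_one_sub_X_sub_X_sq_mul, coeff_mk, coeff_X_pow_mul',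
      if_pos (Nat.le_add_left 3 n), Nat.add_sub_cancel, classCount_containsOnce_p213_add_three,
      Nat.cast_add]
    ring

end counting

end PermPattern

open PowerSeries in
/-- the generating function of `|Sₙ(123,132; 213)|` is `x³/(1−x−x²)²`. -/
theorem stmt3 :
    ((1 - X - X ^ 2) ^ 2 : PowerSeries ℚ) *
      PowerSeries.mk (fun n =>
        (Nat.card {π : Fin n → Fin n // Function.Bijective π ∧
          Avoids p123 π ∧ Avoids p132 π ∧ ContainsOnce p213 π} : ℚ)) = X ^ 3 := by
  open PermPattern in
  calc ((1 - X - X ^ 2) ^ 2 : PowerSeries ℚ) *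
        mk (fun n => (classCount (fun _ => ContainsOnce p213) n : ℚ))
      = (1 - X - X ^ 2) * (X ^ 3 * mk fun n => (classCount (fun _ => Avoids p213) n : ℚ)) := by
        rw [sq, mul_assoc, one_sub_X_sub_X_sq_mul_onceContainers]
    _ = X ^ 3 := by rw [mul_left_comm, one_sub_X_sub_X_sq_mul_avoiders, mul_one]
end

section
/- The number of permutations of length n avoiding both 123 and 132 and containing the pattern 231 exactly once is 1 for all n ≥ 3, and 0 for n < 3 (generating function x³/(1−x)). -/
/-!
Call a pair of positions `i < j` with `π i < π j` an ascent. If `π` avoids 123 and 132, every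
entry after an ascent `(i, j)` lies below `π i`, so the ascent starts a 231 occurrence `(i, j, k)`
for every `k > j`. A unique 231 occurrence therefore leaves a permutation of length `m + 3` with
the single ascent `(m, m + 1)`, and a permutation is determined by its ascents. Conversely, the
permutation `m+2, m+1, …, 3, 1, 2, 0` has exactly this ascent, and so lies in the class.
-/

open Function

theorem eq_of_forall_ascent_iff {α : Type*} [LinearOrder α] [Finite α] {π σ : α → α}
    (hπ : Injective π) (hσ : Injective σ)
    (h : ∀ i j, i < j → (π i < π j ↔ σ i < σ j)) : π = σ := by
  have hlt : ∀ i j, σ i < σ j → π i < π j := by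
    intro i j hσij
    rcases lt_trichotomy i j with hij | rfl | hji
    · exact (h i j hij).2 hσij
    · exact absurd hσij (lt_irrefl _)
    · exact (hπ.ne hji.ne').lt_or_gt.resolve_right fun hπji =>
        ((h j i hji).1 hπji).not_gt hσij
  let e := Equiv.ofBijective σ (Finite.injective_iff_bijective.1 hσ)
  have hmono : StrictMono (π ∘ e.symm) := fun x y hxy =>
    hlt _ _ (by rwa [← e.apply_symm_apply x, ← e.apply_symm_apply y] at hxy)
  funext i
  simpa [e] using congrFun hmono.eq_id (σ i)

theorem strictMono_fin_three_iff {α : Type*} [Preorder α] {f : Fin 3 → α} :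
    StrictMono f ↔ f 0 < f 1 ∧ f 1 < f 2 := by
  simp [Fin.strictMono_iff_lt_succ, Fin.forall_fin_succ]

theorem IsOcc.length_le {k n : ℕ} {τ : Fin k → Fin k} {π : Fin n → Fin n}
    {f : Fin k → Fin n} (h : IsOcc τ π f) : k ≤ n := by
  simpa using Fintype.card_le_of_injective f h.1.injective

section PatternsOfLengthThree
variable {n : ℕ} {π : Fin n → Fin n}

theorem isOcc_p123_iff {f : Fin 3 → Fin n} :
    IsOcc p123 π f ↔
      f 0 < f 1 ∧ f 1 < f 2 ∧ π (f 0) < π (f 1) ∧ π (f 1) < π (f 2) := by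
  simp [IsOcc, strictMono_fin_three_iff, Fin.forall_fin_succ, p123]
  grind

theorem isOcc_p132_iff {f : Fin 3 → Fin n} :
    IsOcc p132 π f ↔
      f 0 < f 1 ∧ f 1 < f 2 ∧ π (f 0) < π (f 2) ∧ π (f 2) < π (f 1) := by
  simp [IsOcc, strictMono_fin_three_iff, Fin.forall_fin_succ, p132]
  grind

theorem isOcc_p231_iff {f : Fin 3 → Fin n} :
    IsOcc p231 π f ↔
      f 0 < f 1 ∧ f 1 < f 2 ∧ π (f 0) < π (f 1) ∧ π (f 2) < π (f 0) := by
  simp [IsOcc, strictMono_fin_three_iff, Fin.forall_fin_succ, p231]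
  grind

theorem avoids_p123_and_avoids_p132_iff (hπ : Injective π) :
    Avoids p123 π ∧ Avoids p132 π ↔
      ∀ i j k, i < j → j < k → π i < π j → π k < π i := by
  constructor
  · rintro ⟨h123, h132⟩ i j k hij hjk hπij
    by_contra hki
    have hik : π i < π k := lt_of_le_of_ne (not_lt.1 hki) (hπ.ne (hij.trans hjk).ne)
    rcases lt_or_gt_of_ne (hπ.ne hjk.ne) with hπjk | hπkj
    · exact h123 ⟨![i, j, k], isOcc_p123_iff.2 ⟨hij, hjk, hπij, hπjk⟩⟩
    · exact h132 ⟨![i, j, k], isOcc_p132_iff.2 ⟨hij, hjk, hik, hπkj⟩⟩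
  · intro h
    refine ⟨fun ⟨f, hf⟩ => ?_, fun ⟨f, hf⟩ => ?_⟩
    · obtain ⟨h01, h12, hπ01, hπ12⟩ := isOcc_p123_iff.1 hf
      exact (h _ _ _ h01 h12 hπ01).not_gt (hπ01.trans hπ12)
    · obtain ⟨h01, h12, hπ02, hπ21⟩ := isOcc_p132_iff.1 hf
      exact (h _ _ _ h01 h12 (hπ02.trans hπ21)).not_gt hπ02

end PatternsOfLengthThree

section LengthAddThree
variable {m : ℕ} {π : Fin (m + 3) → Fin (m + 3)}

theorem vals_of_unique_ascent_triple (hπ : Injective π) {a b c : Fin (m + 3)}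
    (hab : a < b) (hbc : b < c) (hπab : π a < π b)
    (huniq : ∀ i j k, i < j → j < k → π i < π j → i = a ∧ j = b ∧ k = c) :
    (a : ℕ) = m ∧ (b : ℕ) = m + 1 ∧ (c : ℕ) = m + 2 := by
  have hc : (c : ℕ) = m + 2 := by
    have := huniq a b ⟨m + 2, by omega⟩ hab (by simp [Fin.lt_def]; omega) hπab
    exact congrArg Fin.val this.2.2.symm
  have hb : (b : ℕ) = m + 1 := by
    by_contra hb
    have := huniq a b ⟨m + 1, by omega⟩ hab (by simp [Fin.lt_def]; omega) hπab
    have : (c : ℕ) = m + 1 := congrArg Fin.val this.2.2.symm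
    omega
  refine ⟨?_, hb, hc⟩
  -- if `a < m`, then `(a, m)` is not an ascent, which makes `(m, b)` one
  by_contra ha
  set d : Fin (m + 3) := ⟨m, by omega⟩
  have had : a < d := by simp only [d, Fin.lt_def]; omega
  have hdb : d < b := by simp only [d, Fin.lt_def]; omega
  have hπda : π d < π a := by
    refine (hπ.ne had.ne').lt_or_gt.resolve_right fun hπad => ?_
    have := (huniq a d c had (hdb.trans hbc) hπad).2.1
    omega
  exact ha (congrArg Fin.val (huniq d b c hdb hbc (hπda.trans hπab)).1).symm

theorem lt_iff_of_unique_ascent_triple (hπ : Injective π) {a b c : Fin (m + 3)}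
    (hab : a < b) (hbc : b < c) (hπab : π a < π b) (hπca : π c < π a)
    (huniq : ∀ i j k, i < j → j < k → π i < π j → i = a ∧ j = b ∧ k = c)
    {i j : Fin (m + 3)} (hij : i < j) :
    π i < π j ↔ (i : ℕ) = m ∧ (j : ℕ) = m + 1 := by
  obtain ⟨ha, hb, hc⟩ := vals_of_unique_ascent_triple hπ hab hbc hπab huniq
  constructor
  · intro hπij
    by_cases hj : (j : ℕ) < m + 2
    · obtain ⟨rfl, rfl, -⟩ := huniq i j c hij (by omega) hπij
      exact ⟨ha, hb⟩
    · have hjc : j = c := by ext; omega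
      subst hjc
      have hia : i < a := by
        have hia : i ≠ a := fun h => (hπij.trans hπca).ne (congrArg π h)
        have hib : i ≠ b := fun h => (hπij.trans (hπca.trans hπab)).ne (congrArg π h)
        omega
      exact absurd (huniq i a j hia (by omega) (hπij.trans hπca)).2.1 hab.ne
  · rintro ⟨hi, hj⟩
    obtain rfl : i = a := by ext; omega
    obtain rfl : j = b := by ext; omega
    exact hπab

theorem lt_iff_of_containsOnce_p231 (hπ : Injective π)
    (hav : ∀ i j k, i < j → j < k → π i < π j → π k < π i) (h : ContainsOnce p231 π)
    {i j : Fin (m + 3)} (hij : i < j) :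
    π i < π j ↔ (i : ℕ) = m ∧ (j : ℕ) = m + 1 := by
  obtain ⟨f, hf, hfu⟩ := h
  obtain ⟨h01, h12, hπ01, hπ20⟩ := isOcc_p231_iff.1 hf
  refine lt_iff_of_unique_ascent_triple hπ h01 h12 hπ01 hπ20 (fun i j k hij hjk hπij => ?_) hij
  have := hfu ![i, j, k] (isOcc_p231_iff.2 ⟨hij, hjk, hπij, hav i j k hij hjk hπij⟩)
  exact ⟨congrFun this 0, congrFun this 1, congrFun this 2⟩

theorem avoids_p123_p132_containsOnce_p231_of_lt_iff (hπ : Injective π)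
    (h : ∀ i j : Fin (m + 3), i < j → (π i < π j ↔ (i : ℕ) = m ∧ (j : ℕ) = m + 1)) :
    Avoids p123 π ∧ Avoids p132 π ∧ ContainsOnce p231 π := by
  have hdesc (i j : Fin (m + 3)) (hij : i < j) (hne : ¬ ((i : ℕ) = m ∧ (j : ℕ) = m + 1)) :
      π j < π i :=
    (hπ.ne hij.ne').lt_or_gt.resolve_right fun hπij => hne ((h i j hij).1 hπij)
  refine and_assoc.1 ⟨(avoids_p123_and_avoids_p132_iff hπ).2 fun i j k hij hjk hπij => ?_, ?_⟩
  · obtain ⟨-, hj⟩ := (h i j hij).1 hπij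
    exact hdesc i k (hij.trans hjk) (by omega)
  refine ⟨![⟨m, by omega⟩, ⟨m + 1, by omega⟩, ⟨m + 2, by omega⟩],
    isOcc_p231_iff.2 ⟨by simp [Fin.lt_def], by simp [Fin.lt_def],
      (h _ _ (by simp [Fin.lt_def])).2 ⟨rfl, rfl⟩,
      hdesc _ _ (by simp [Fin.lt_def]) (by simp)⟩,
    fun g hg => ?_⟩
  obtain ⟨h01, h12, hπ01, -⟩ := isOcc_p231_iff.1 hg
  obtain ⟨h0, h1⟩ := (h _ _ h01).1 hπ01
  funext t
  fin_cases t <;> ext <;> simp <;> omega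

end LengthAddThree

def target (m : ℕ) (i : Fin (m + 3)) : Fin (m + 3) :=
  ⟨if (i : ℕ) < m then m + 2 - i
    else if (i : ℕ) = m then 1
    else if (i : ℕ) = m + 1 then 2
    else 0, by split_ifs <;> omega⟩

theorem target_injective (m : ℕ) : Injective (target m) := by
  intro i j h
  have := congrArg Fin.val h
  simp only [target] at this
  ext
  split_ifs at this <;> omega

theorem target_lt_iff (m : ℕ) {i j : Fin (m + 3)} (hij : i < j) :
    target m i < target m j ↔ (i : ℕ) = m ∧ (j : ℕ) = m + 1 := by
  simp only [target, Fin.lt_def]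
  split_ifs <;> omega

theorem eq_target_iff (m : ℕ) (π : Fin (m + 3) → Fin (m + 3)) :
    Bijective π ∧ Avoids p123 π ∧ Avoids p132 π ∧ ContainsOnce p231 π ↔
      π = target m := by
  constructor
  · rintro ⟨hπ, h123, h132, h231⟩
    have hav := (avoids_p123_and_avoids_p132_iff hπ.1).1 ⟨h123, h132⟩
    exact eq_of_forall_ascent_iff hπ.1 (target_injective m) fun i j hij =>
      (lt_iff_of_containsOnce_p231 hπ.1 hav h231 hij).trans (target_lt_iff m hij).symm
  · rintro rfl
    exact ⟨Finite.injective_iff_bijective.1 (target_injective m),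
      avoids_p123_p132_containsOnce_p231_of_lt_iff (target_injective m)
        fun _ _ => target_lt_iff m⟩

/-- `|Sₙ(123,132; 231)| = 1` for `n ≥ 3` and `0` for `n < 3`. -/
theorem stmt4 (n : ℕ) :
    Nat.card {π : Fin n → Fin n // Function.Bijective π ∧
      Avoids p123 π ∧ Avoids p132 π ∧ ContainsOnce p231 π} =
      if 3 ≤ n then 1 else 0 := by
  split_ifs with hn
  · obtain ⟨m, rfl⟩ := Nat.exists_eq_add_of_le' hn
    simp only [eq_target_iff]
    exact Nat.card_unique
  · rw [Nat.card_eq_zero]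
    exact .inl ⟨fun ⟨_, _, _, _, _, hf, _⟩ => hn hf.length_le⟩
end

section
/- The number of permutations of length n avoiding both 123 and 132 and containing 321 exactly once is 1 for n = 3, 3 for n = 4, and 0 otherwise. -/
instance {k n : ℕ} (τ : Fin k → Fin k) (π : Fin n → Fin n) (f : Fin k → Fin n) :
    Decidable (IsOcc τ π f) := by
  unfold IsOcc StrictMono; infer_instance

instance {k n : ℕ} (τ : Fin k → Fin k) (π : Fin n → Fin n) : Decidable (Avoids τ π) := by
  unfold Avoids; infer_instance

instance {k n : ℕ} (τ : Fin k → Fin k) (π : Fin n → Fin n) : Decidable (ContainsOnce τ π) := by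
  unfold ContainsOnce ExistsUnique; infer_instance

lemma sm3 {n : ℕ} {a b c : Fin n} (hab : a < b) (hbc : b < c) : StrictMono ![a, b, c] := by
  have hac := hab.trans hbc
  intro i j hij
  fin_cases i <;> fin_cases j <;>
    first
      | exact absurd hij (by decide)
      | simpa using hab
      | simpa using hbc
      | simpa using hac

lemma isOcc321 {n : ℕ} {π : Fin n → Fin n} {a b c : Fin n} (hab : a < b) (hbc : b < c)
    (h1 : π b < π a) (h2 : π c < π b) : IsOcc p321 π ![a, b, c] := by
  refine ⟨sm3 hab hbc, ?_⟩
  have h3 := h2.trans h1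
  intro i j
  fin_cases i <;> fin_cases j <;>
    simp [p321] <;>
    first
      | exact h1 | exact h2 | exact h3
      | exact h1.le | exact h2.le | exact h3.le

lemma isOcc123 {n : ℕ} {π : Fin n → Fin n} {a b c : Fin n} (hab : a < b) (hbc : b < c)
    (h1 : π a < π b) (h2 : π b < π c) : IsOcc p123 π ![a, b, c] := by
  refine ⟨sm3 hab hbc, ?_⟩
  have h3 := h1.trans h2
  intro i j
  fin_cases i <;> fin_cases j <;>
    simp [p123] <;>
    first
      | exact h1 | exact h2 | exact h3
      | exact h1.le | exact h2.le | exact h3.le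

lemma isOcc132 {n : ℕ} {π : Fin n → Fin n} {a b c : Fin n} (hab : a < b) (hbc : b < c)
    (h1 : π a < π c) (h2 : π c < π b) : IsOcc p132 π ![a, b, c] := by
  refine ⟨sm3 hab hbc, ?_⟩
  have h3 := h1.trans h2
  intro i j
  fin_cases i <;> fin_cases j <;>
    simp [p132] <;>
    first
      | exact h1 | exact h2 | exact h3
      | exact h1.le | exact h2.le | exact h3.le

lemma empty5 {n : ℕ} (hn : 5 ≤ n) (π : Fin n → Fin n) (hbij : Function.Bijective π)
    (hA1 : Avoids p123 π) (hA2 : Avoids p132 π) (hC : ContainsOnce p321 π) : False := by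
  have hinj := hbij.1
  obtain ⟨f, hf, huniq⟩ := hC
  set a := f 0 with ha
  set b := f 1 with hb
  set c := f 2 with hc
  have hab : a < b := hf.1 (show (0 : Fin 3) < 1 by decide)
  have hbc : b < c := hf.1 (show (1 : Fin 3) < 2 by decide)
  have hpba : π b < π a := (hf.2 1 0).1 (by decide)
  have hpcb : π c < π b := (hf.2 2 1).1 (by decide)
  -- uniqueness of the decreasing triple
  have U : ∀ x y z : Fin n, x < y → y < z → π y < π x → π z < π y →
      x = a ∧ y = b ∧ z = c := by
    intro x y z h1 h2 h3 h4
    have he := huniq _ (isOcc321 h1 h2 h3 h4)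
    refine ⟨?_, ?_, ?_⟩
    · have := congrFun he 0; simpa using this
    · have := congrFun he 1; simpa using this
    · have := congrFun he 2; simpa using this
  -- avoidance: no element has two larger elements to its right
  have K : ∀ i j k : Fin n, i < j → i < k → j ≠ k → π i < π j → π i < π k → False := by
    intro i j k hij hik hjk h1 h2
    rcases lt_trichotomy j k with h | h | h
    · rcases lt_trichotomy (π j) (π k) with h' | h' | h'
      · exact hA1 ⟨_, isOcc123 hij h h1 h'⟩
      · exact hjk (hinj h')
      · exact hA2 ⟨_, isOcc132 hij h h2 h'⟩
    · exact hjk h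
    · rcases lt_trichotomy (π k) (π j) with h' | h' | h'
      · exact hA1 ⟨_, isOcc123 hik h h2 h'⟩
      · exact hjk (hinj h'.symm)
      · exact hA2 ⟨_, isOcc132 hik h h1 h'⟩
  -- every element outside {a,b,c} lies after b and has value above π b
  have C : ∀ x : Fin n, x ≠ a → x ≠ b → x ≠ c → b < x ∧ π b < π x := by
    intro x hxa hxb hxc
    have hax : a < x := by
      rcases lt_trichotomy x a with h | h | h
      · have h1 : π x < π a := by
          rcases lt_trichotomy (π a) (π x) with h' | h' | h'
          · exact absurd (U x a b h hab h' hpba).1 hxa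
          · exact absurd (hinj h') (Ne.symm hxa)
          · exact h'
        have h2 : π x < π b := by
          rcases lt_trichotomy (π b) (π x) with h' | h' | h'
          · exact absurd (U x b c (h.trans hab) hbc h' hpcb).1 hxa
          · exact absurd (hinj h') (Ne.symm hxb)
          · exact h'
        exact absurd (K x a b h (h.trans hab) hab.ne h1 h2) id
      · exact absurd h hxa
      · exact h
    have hbx : b < x := by
      rcases lt_trichotomy x b with h | h | h
      · -- a < x < b
        have h1 : π x < π b := by
          rcases lt_trichotomy (π b) (π x) with h' | h' | h'
          · exact absurd (U x b c h hbc h' hpcb).1 (ne_of_gt hax)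
          · exact absurd (hinj h') (Ne.symm hxb)
          · exact h'
        have h2 : π x < π c := by
          rcases lt_trichotomy (π c) (π x) with h' | h' | h'
          · exact absurd (U a x c hax (h.trans hbc) (h1.trans hpba) h').2.1 hxb
          · exact absurd (hinj h') (Ne.symm hxc)
          · exact h'
        exact absurd (K x b c h (h.trans hbc) hbc.ne h1 h2) id
      · exact absurd h hxb
      · exact h
    refine ⟨hbx, ?_⟩
    rcases lt_trichotomy (π x) (π b) with h' | h' | h'
    · exact absurd (U a b x hab hbx hpba h').2.2 hxc
    · exact absurd (hinj h') hxb
    · exact h'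
  -- there are two distinct elements outside {a,b,c}
  have hcard : 1 < (({a, b, c} : Finset (Fin n))ᶜ).card := by
    have h1 : (({a, b, c} : Finset (Fin n))).card ≤ 3 := by
      apply le_trans (Finset.card_insert_le _ _)
      have := Finset.card_insert_le b ({c} : Finset (Fin n))
      simp at this ⊢
      omega
    rw [Finset.card_compl]
    have := Fintype.card_fin n
    omega
  obtain ⟨x, hx, y, hy, hxy⟩ := Finset.one_lt_card.1 hcard
  simp [Finset.mem_compl, Finset.mem_insert] at hx hy
  obtain ⟨hcx, hx⟩ := C x hx.1 hx.2.1 hx.2.2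
  obtain ⟨hcy, hy⟩ := C y hy.1 hy.2.1 hy.2.2
  exact K b x y hcx hcy hxy hx hy

/-- `|Sₙ(123,132; 321)|` is `1` for `n = 3`, `3` for `n = 4`, `0` otherwise. -/
theorem stmt5 (n : ℕ) :
    Nat.card {π : Fin n → Fin n // Function.Bijective π ∧
      Avoids p123 π ∧ Avoids p132 π ∧ ContainsOnce p321 π} =
      if n = 3 then 1 else if n = 4 then 3 else 0 := by
  by_cases h5 : 5 ≤ n
  · rw [if_neg (by omega), if_neg (by omega)]
    have : IsEmpty {π : Fin n → Fin n // Function.Bijective π ∧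
        Avoids p123 π ∧ Avoids p132 π ∧ ContainsOnce p321 π} :=
      ⟨fun ⟨π, h1, h2, h3, h4⟩ => empty5 h5 π h1 h2 h3 h4⟩
    exact Nat.card_of_isEmpty
  · push_neg at h5
    interval_cases n <;> rw [Nat.card_eq_fintype_card] <;>
      set_option maxRecDepth 100000 in decide
end

section
/- The number of permutations of length n avoiding both 132 and 321 and containing the increasing pattern (1,2,…,k) exactly once is: 1 if n = k, and 2(2k − j) for n = j with k+1 ≤ j ≤ 2k−1, and 0 otherwise (generating function x^k + 2·Σ_{j=k+1}^{2k−1}(2k−j)x^j). -/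
/-!
Let `z` be the position of the entry `0` (positions and values start at `0`). Avoiding 321 makes
`π` increasing before `z`; avoiding 132 makes it increasing from `z` on, and puts each entry after
`z` either below `π 0` or above every entry before `z`. Counting, for each `j`, the entries
smaller than `π j` (there are exactly `π j` of them) then shows that `π` is the block permutation
with `a = z` initial entries `b, …, b + a - 1`, where `b = π 0`, followed by `0, …, b - 1` and a
fixed tail. An increasing subsequence of it misses the first or the second block, so it has
`C(n-b,k) + C(n-a,k) - C(n-a-b,k)` increasing subsequences of length `k`. For `k ≥ 1` this is `1`
exactly when `a = b = 0` and `n = k`, or when one of `n - a`, `n - b` equals `k` and the other is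
smaller; for `k < n < 2k` that leaves `2(2k - n)` pairs `(a, b)`.
-/

open Finset Function

section Patterns

variable {n : ℕ} {π : Fin n → Fin n}

theorem avoids_p132_iff :
    Avoids p132 π ↔ ∀ ⦃x y w : Fin n⦄, x < y → y < w → π x < π w → π y ≤ π w := by
  refine ⟨fun h x y w hxy hyw hxw => le_of_not_gt fun hwy => h ⟨![x, y, w], ?_, fun i j => ?_⟩,
    fun h ⟨f, hf, hτ⟩ => ?_⟩
  · simp [Fin.strictMono_iff_lt_succ, Fin.forall_fin_succ, hxy, hyw]
  · fin_cases i <;> fin_cases j <;> simp [p132] <;> order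
  · exact (h (hf (by decide : (0 : Fin 3) < 1)) (hf (by decide : (1 : Fin 3) < 2))
      ((hτ 0 2).1 (by decide))).not_gt ((hτ 2 1).1 (by decide))

theorem avoids_p321_iff :
    Avoids p321 π ↔ ∀ ⦃x y w : Fin n⦄, x < y → y < w → π w < π y → π x ≤ π y := by
  refine ⟨fun h x y w hxy hyw hwy => le_of_not_gt fun hyx => h ⟨![x, y, w], ?_, fun i j => ?_⟩,
    fun h ⟨f, hf, hτ⟩ => ?_⟩
  · simp [Fin.strictMono_iff_lt_succ, Fin.forall_fin_succ, hxy, hyw]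
  · fin_cases i <;> fin_cases j <;> simp [p321] <;> order
  · exact (h (hf (by decide : (0 : Fin 3) < 1)) (hf (by decide : (1 : Fin 3) < 2))
      ((hτ 2 1).1 (by decide))).not_gt ((hτ 1 0).1 (by decide))

theorem isOcc_id_iff {k : ℕ} {f : Fin k → Fin n} :
    IsOcc (fun i => i) π f ↔ StrictMono f ∧ StrictMono (π ∘ f) :=
  ⟨fun h => ⟨h.1, fun _ _ hij => (h.2 _ _).1 hij⟩,
    fun h => ⟨h.1, fun _ _ => h.2.lt_iff_lt.symm⟩⟩

end Patterns

/-- In one-line notation this is `(b+1, …, b+a, 1, …, b, a+b+1, …, n)`, shifted to start at `0`. -/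
def blockPerm {n : ℕ} (a b : ℕ) (h : a + b ≤ n) (i : Fin n) : Fin n :=
  ⟨if (i : ℕ) < a then i + b else if (i : ℕ) < a + b then i - a else i, by split_ifs <;> omega⟩

section BlockPerm

variable {n a b : ℕ} (h : a + b ≤ n)

theorem blockPerm_val (i : Fin n) : (blockPerm a b h i : ℕ) =
    if (i : ℕ) < a then i + b else if (i : ℕ) < a + b then i - a else i :=
  rfl

theorem blockPerm_bijective : Bijective (blockPerm a b h) := by
  refine Finite.injective_iff_bijective.1 fun i j hij => Fin.ext ?_
  have := congrArg Fin.val hij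
  simp only [blockPerm_val] at this
  split_ifs at this <;> omega

theorem avoids_p132_blockPerm : Avoids p132 (blockPerm a b h) := by
  refine avoids_p132_iff.2 fun x y w hxy hyw hxw => ?_
  simp only [Fin.lt_def, Fin.le_def, blockPerm_val] at *
  split_ifs at * <;> omega

theorem avoids_p321_blockPerm : Avoids p321 (blockPerm a b h) := by
  refine avoids_p321_iff.2 fun x y w hxy hyw hwy => ?_
  simp only [Fin.lt_def, Fin.le_def, blockPerm_val] at *
  split_ifs at * <;> omega

theorem blockPerm_inj {a' b' : ℕ} (h' : a' + b' ≤ n) (hab : a = 0 ↔ b = 0)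
    (hab' : a' = 0 ↔ b' = 0) : blockPerm a b h = blockPerm a' b' h' ↔ a = a' ∧ b = b' := by
  refine ⟨fun he => ?_, fun ⟨ha, hb⟩ => by subst ha hb; rfl⟩
  by_cases h0 : a = 0 ∧ a' = 0
  · omega
  have hval := fun m (hm : m < n) => congrArg Fin.val (congrFun he ⟨m, hm⟩)
  have e0 := hval 0 (by omega)
  have e1 := hval (min a a') (by omega)
  simp only [blockPerm_val] at e0 e1
  split_ifs at e0 e1 <;> omega

theorem strictMonoOn_blockPerm_iff (S : Set (Fin n)) :
    StrictMonoOn (blockPerm a b h) S ↔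
      (∀ i ∈ S, (i : ℕ) < a ∨ a + b ≤ i) ∨ (∀ i ∈ S, a ≤ (i : ℕ)) := by
  constructor
  · intro hS
    by_contra hc
    push Not at hc
    obtain ⟨⟨j, hj, hja, hjb⟩, ⟨i, hi, hia⟩⟩ := hc
    have := hS hi hj (Fin.lt_def.2 (by omega))
    simp only [Fin.lt_def, blockPerm_val] at this
    split_ifs at this <;> omega
  · rintro (hS | hS) x hx y hy hxy <;>
    · have := hS x hx
      have := hS y hy
      simp only [Fin.lt_def, blockPerm_val] at *
      split_ifs <;> omega

end BlockPerm

section Rank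

variable {n : ℕ} {π : Fin n → Fin n}

theorem Function.Bijective.val_apply_eq_card (hπ : Bijective π) (j : Fin n) :
    (π j : ℕ) = #{i | π i < π j} := by
  rw [← Fin.card_Iio, ← filter_gt_eq_Iio]
  refine (card_nbij π (fun i hi => by simpa using hi) hπ.injective.injOn fun v hv => ?_).symm
  obtain ⟨i, rfl⟩ := hπ.2 v
  exact ⟨i, by simpa using hv, rfl⟩

theorem Function.Bijective.val_apply_eq_card_add_card (hπ : Bijective π) (z j : Fin n) :
    (π j : ℕ) = #{i | i < z ∧ π i < π j} + #{i | z ≤ i ∧ π i < π j} := by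
  rw [hπ.val_apply_eq_card, ← card_filter_add_card_filter_not (fun i => i < z)]
  simp only [filter_filter, not_lt, and_comm]

end Rank

section Avoiders

variable {n : ℕ} [NeZero n] {π : Fin n → Fin n} {i j z : Fin n}

theorem lt_apply_of_apply_eq_zero (hπ : Injective π) (hz : π z = 0) (hj : j ≠ z) :
    π z < π j :=
  hz ▸ lt_of_le_of_ne (Fin.zero_le _) fun h => hj (hπ (h.symm.trans hz.symm))

theorem strictMonoOn_Ici_of_avoids_p132 (hπ : Injective π) (h132 : Avoids p132 π)
    (hz : π z = 0) : StrictMonoOn π (Set.Ici z) := by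
  intro i (hi : z ≤ i) j _ hij
  rcases hi.eq_or_lt with rfl | hzi
  · exact lt_apply_of_apply_eq_zero hπ hz hij.ne'
  · have hzj := lt_apply_of_apply_eq_zero hπ hz (hzi.trans hij).ne'
    exact (avoids_p132_iff.1 h132 hzi hij hzj).lt_of_ne (hπ.ne hij.ne)

theorem strictMonoOn_Iio_of_avoids_p321 (hπ : Injective π) (h321 : Avoids p321 π)
    (hz : π z = 0) : StrictMonoOn π (Set.Iio z) := by
  intro i _ j (hj : j < z) hij
  have hzj := lt_apply_of_apply_eq_zero hπ hz hj.ne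
  exact (avoids_p321_iff.1 h321 hij hj hzj).lt_of_ne (hπ.ne hij.ne)

theorem apply_lt_iff_of_avoids (hπ : Injective π) (h132 : Avoids p132 π)
    (h321 : Avoids p321 π) (hz : π z = 0) (hi : i < z) (hj : z ≤ j) :
    π i < π j ↔ π 0 < π j := by
  have hmono := strictMonoOn_Iio_of_avoids_p321 hπ h321 hz
  refine ⟨fun hij => ?_, fun h0j => ?_⟩
  · exact (hmono.monotoneOn ((Fin.zero_le i).trans_lt hi) hi (Fin.zero_le i)).trans_lt hij
  rcases (Fin.zero_le i).eq_or_lt with rfl | h0i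
  · exact h0j
  · exact (avoids_p132_iff.1 h132 h0i (hi.trans_le hj) h0j).lt_of_ne
      (hπ.ne (hi.trans_le hj).ne)

theorem val_apply_of_lt_of_avoids (hπ : Bijective π) (h132 : Avoids p132 π)
    (h321 : Avoids p321 π) (hz : π z = 0) (hj : j < z) : (π j : ℕ) = j + π 0 := by
  have hmono := strictMonoOn_Iio_of_avoids_p321 hπ.injective h321 hz
  have key : ∀ j < z, (π j : ℕ) = j + #{i | z ≤ i ∧ π i < π 0} := by
    intro j hj
    rw [hπ.val_apply_eq_card_add_card z j, ← Fin.card_Iio j, ← filter_gt_eq_Iio (a := j)]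
    congr 1
    · congr 1
      ext i
      simp only [mem_filter, mem_univ, true_and]
      exact ⟨fun ⟨hi, hij⟩ => (hmono.lt_iff_lt hi hj).1 hij,
        fun hij => ⟨hij.trans hj, hmono (hij.trans hj) hj hij⟩⟩
    · refine congrArg card (filter_congr fun i _ => and_congr_right fun hi => ?_)
      have h := apply_lt_iff_of_avoids hπ.injective h132 h321 hz hj hi
      have hij : π i ≠ π j := hπ.injective.ne (hj.trans_le hi).ne'
      have hi0 : π i ≠ π 0 := hπ.injective.ne ((Fin.zero_le j).trans_lt (hj.trans_le hi)).ne'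
      omega
  rw [key j hj, key 0 ((Fin.zero_le j).trans_lt hj), Fin.val_zero, zero_add]

theorem val_apply_of_le_of_avoids (hπ : Bijective π) (h132 : Avoids p132 π)
    (h321 : Avoids p321 π) (hz : π z = 0) (hj : z ≤ j) :
    (π j : ℕ) = j - z + if π 0 < π j then (z : ℕ) else 0 := by
  have hmono := strictMonoOn_Ici_of_avoids_p132 hπ.injective h132 hz
  rw [hπ.val_apply_eq_card_add_card z j, add_comm, ← Fin.card_Ico, ← filter_le_lt_eq_Ico]
  congr 1
  · congr 1
    ext i
    simp only [mem_filter, mem_univ, true_and]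
    exact ⟨fun ⟨hi, hij⟩ => ⟨hi, (hmono.lt_iff_lt hi hj).1 hij⟩,
      fun ⟨hi, hij⟩ => ⟨hi, hmono hi hj hij⟩⟩
  · rw [filter_congr fun i _ => and_congr_right fun hi =>
      apply_lt_iff_of_avoids hπ.injective h132 h321 hz hi hj]
    split_ifs with h0j
    · simp [h0j, filter_gt_eq_Iio]
    · simp [h0j]

theorem eq_blockPerm_of_avoids (hπ : Bijective π) (h132 : Avoids p132 π)
    (h321 : Avoids p321 π) (hz : π z = 0) (h : (z : ℕ) + π 0 ≤ n) :
    π = blockPerm z (π 0) h := by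
  have hinj : ∀ i j : Fin n, (π i : ℕ) = π j → (i : ℕ) = j := fun i j he =>
    congrArg Fin.val (hπ.1 (Fin.ext he))
  have hlt := fun j (hj : j < z) => val_apply_of_lt_of_avoids hπ h132 h321 hz hj
  funext j
  apply Fin.ext
  rw [blockPerm_val]
  split_ifs with h1 h2
  · exact hlt j h1
  · have hj := val_apply_of_le_of_avoids hπ h132 h321 hz (j := j) (Fin.le_def.2 (by omega))
    split_ifs at hj with h0j
    · -- `π j = j` would be one of the values `π 0, …, z + π 0 - 1`, all taken before `z`
      have hp := hinj ⟨π j - π 0, by omega⟩ j (by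
        rw [hlt _ (Fin.lt_def.2 (by simp only; omega))]
        simp only
        omega)
      simp only at hp
      omega
    · omega
  · have hj := val_apply_of_le_of_avoids hπ h132 h321 hz (j := j) (Fin.le_def.2 (by omega))
    split_ifs at hj with h0j
    · omega
    · -- `π j = j - z ≥ π 0` would force `π j = π 0`
      have := hinj j 0
      simp only [Fin.lt_def, Fin.val_zero] at *
      omega

end Avoiders

theorem exists_eq_blockPerm_of_avoids {n : ℕ} {π : Fin n → Fin n} (hπ : Bijective π)
    (h132 : Avoids p132 π) (h321 : Avoids p321 π) :
    ∃ a b, ∃ h : a + b ≤ n, (a = 0 ↔ b = 0) ∧ π = blockPerm a b h := by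
  rcases n.eq_zero_or_pos with rfl | hn
  · exact ⟨0, 0, le_rfl, Iff.rfl, funext fun i => i.elim0⟩
  have : NeZero n := ⟨hn.ne'⟩
  obtain ⟨z, hz⟩ := hπ.2 0
  have hz0 : (z : ℕ) = 0 ↔ (π 0 : ℕ) = 0 := by
    rw [← Fin.val_zero n, ← Fin.ext_iff, ← Fin.ext_iff, ← hz, hπ.1.eq_iff, eq_comm]
  have hsum : (z : ℕ) + π 0 ≤ n := by
    rcases Nat.eq_zero_or_pos (z : ℕ) with h0 | h0
    · omega
    · have hlast := val_apply_of_lt_of_avoids hπ h132 h321 hz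
        (j := ⟨z - 1, by omega⟩) (Fin.lt_def.2 (Nat.sub_lt h0 one_pos))
      have := (π ⟨z - 1, by omega⟩).isLt
      simp only at hlast
      omega
  exact ⟨z, π 0, hsum, hz0, eq_blockPerm_of_avoids hπ h132 h321 hz hsum⟩

section Counting

theorem Fin.card_filter_le_val {n m : ℕ} : #{i : Fin n | m ≤ (i : ℕ)} = n - m := by
  have := card_filter_add_card_filter_not (s := univ) fun i : Fin n => (i : ℕ) < m
  simp only [Fin.card_filter_val_lt, not_lt, card_univ, Fintype.card_fin] at this
  omega

theorem card_powersetCard_union_add_choose {α : Type*} [DecidableEq α] (k : ℕ)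
    (X Y : Finset α) :
    #(powersetCard k X ∪ powersetCard k Y) + (#(X ∩ Y)).choose k =
      (#X).choose k + (#Y).choose k := by
  have hinter : powersetCard k X ∩ powersetCard k Y = powersetCard k (X ∩ Y) := by
    ext S
    simp only [mem_inter, mem_powersetCard, subset_inter_iff]
    tauto
  rw [← card_powersetCard, ← card_powersetCard, ← card_powersetCard, ← hinter,
    card_union_add_card_inter]

def isOccIdEquiv {n k : ℕ} (π : Fin n → Fin n) :
    {f : Fin k → Fin n // IsOcc (fun i => i) π f} ≃
      {S : Finset (Fin n) // S.card = k ∧ StrictMonoOn π ↑S} where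
  toFun f := ⟨univ.image f.1, by
    obtain ⟨hf, hπf⟩ := isOcc_id_iff.1 f.2
    refine ⟨by rw [card_image_of_injective _ hf.injective, card_fin], ?_⟩
    rintro _ hx _ hy hxy
    obtain ⟨i, -, rfl⟩ := mem_image.1 hx
    obtain ⟨j, -, rfl⟩ := mem_image.1 hy
    exact hπf (hf.lt_iff_lt.1 hxy)⟩
  invFun S := ⟨S.1.orderEmbOfFin S.2.1, isOcc_id_iff.2 ⟨(S.1.orderEmbOfFin S.2.1).strictMono,
    fun _ _ hij => S.2.2 (by simp) (by simp) ((S.1.orderEmbOfFin S.2.1).strictMono hij)⟩⟩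
  left_inv f := Subtype.ext (orderEmbOfFin_unique _ (fun _ => mem_image_of_mem _ (mem_univ _))
    (isOcc_id_iff.1 f.2).1).symm
  right_inv S := Subtype.ext (image_orderEmbOfFin_univ _ _)

theorem containsOnce_id_iff {n k : ℕ} (π : Fin n → Fin n) :
    ContainsOnce (fun i : Fin k => i) π ↔
      #{S : Finset (Fin n) | S.card = k ∧ StrictMonoOn π ↑S} = 1 := by
  rw [ContainsOnce, (isOccIdEquiv π).existsUnique_subtype_congr,
    Fintype.existsUnique_iff_card_one]

theorem containsOnce_blockPerm_iff {n a b : ℕ} (h : a + b ≤ n) (k : ℕ) :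
    ContainsOnce (fun i : Fin k => i) (blockPerm a b h) ↔
      (n - b).choose k + (n - a).choose k = 1 + (n - a - b).choose k := by
  set X : Finset (Fin n) := {i | (i : ℕ) < a ∨ a + b ≤ i} with hX
  set Y : Finset (Fin n) := {i | a ≤ (i : ℕ)} with hY
  have hmono : ({S | S.card = k ∧ StrictMonoOn (blockPerm a b h) ↑S} :
      Finset (Finset (Fin n))) = powersetCard k X ∪ powersetCard k Y := by
    ext S
    simp only [mem_filter, mem_univ, true_and, mem_union, mem_powersetCard,
      strictMonoOn_blockPerm_iff, subset_iff, X, Y]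
    tauto
  have hcardX : #X = n - b := by
    rw [hX, filter_or, card_union_of_disjoint, Fin.card_filter_val_lt, Fin.card_filter_le_val]
    · omega
    · exact disjoint_filter.2 fun i _ hi => by omega
  have hXY : X ∩ Y = ({i | a + b ≤ (i : ℕ)} : Finset (Fin n)) := by
    ext i
    simp only [mem_inter, mem_filter, mem_univ, true_and, X, Y]
    omega
  have hcount := card_powersetCard_union_add_choose k X Y
  rw [hXY, Fin.card_filter_le_val, hcardX, hY, Fin.card_filter_le_val, ← hmono] at hcount
  rw [containsOnce_id_iff, show n - a - b = n - (a + b) by omega]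
  omega

end Counting

section Arithmetic

theorem Nat.choose_lt_choose_of_lt {t x k : ℕ} (hk : 1 ≤ k) (hkt : k ≤ t) (htx : t < x) :
    t.choose k < x.choose k := by
  obtain ⟨k, rfl⟩ : ∃ k', k = k' + 1 := ⟨k - 1, by omega⟩
  have := Nat.choose_pos (n := t) (k := k) (by omega)
  calc t.choose (k + 1) < t.choose k + t.choose (k + 1) := by omega
    _ = (t + 1).choose (k + 1) := (Nat.choose_succ_succ' t k).symm
    _ ≤ x.choose (k + 1) := Nat.choose_le_choose _ htx

theorem Nat.choose_add_choose_eq_one_add_choose_iff {k t x y : ℕ} (hk : 1 ≤ k) (hx : t < x)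
    (hy : t < y) :
    x.choose k + y.choose k = 1 + t.choose k ↔ (x = k ∧ y < k) ∨ (y = k ∧ x < k) := by
  by_cases hkt : k ≤ t
  · have := Nat.choose_lt_choose_of_lt hk hkt hx
    have := Nat.choose_lt_choose_of_lt hk hkt hy
    omega
  rw [Nat.choose_eq_zero_of_lt (by omega : t < k),
    show x.choose k + y.choose k = 1 + 0 ↔
      (x.choose k = 1 ∧ y.choose k = 0) ∨ (y.choose k = 1 ∧ x.choose k = 0) by omega]
  simp only [Nat.choose_eq_one_iff, Nat.choose_eq_zero_iff]
  omega

/-- The condition `a = 0 ↔ b = 0` selects the single pair `(0, 0)` among the parameters of the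
identity permutation. -/
def blockParams (n k : ℕ) : Finset (ℕ × ℕ) :=
  {p ∈ range (n + 1) ×ˢ range (n + 1) | p.1 + p.2 ≤ n ∧ (p.1 = 0 ↔ p.2 = 0) ∧
    (n - p.2).choose k + (n - p.1).choose k = 1 + (n - p.1 - p.2).choose k}

theorem mem_blockParams {n k a b : ℕ} : (a, b) ∈ blockParams n k ↔
    a + b ≤ n ∧ (a = 0 ↔ b = 0) ∧
      (n - b).choose k + (n - a).choose k = 1 + (n - a - b).choose k := by
  simp only [blockParams, mem_filter, mem_product, mem_range]
  omega

theorem mem_blockParams_iff {n k a b : ℕ} (hk : 1 ≤ k) : (a, b) ∈ blockParams n k ↔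
    a + b ≤ n ∧ ((a = 0 ∧ b = 0 ∧ n = k) ∨
      (0 < a ∧ 0 < b ∧ ((n - b = k ∧ n - a < k) ∨ (n - a = k ∧ n - b < k)))) := by
  rw [mem_blockParams]
  refine and_congr_right fun hab => ?_
  rcases Nat.eq_zero_or_pos a with rfl | ha <;> rcases Nat.eq_zero_or_pos b with rfl | hb
  · simp only [Nat.sub_zero, Nat.add_right_cancel_iff, Nat.choose_eq_one_iff, true_and]
    omega
  · omega
  · omega
  · rw [Nat.choose_add_choose_eq_one_add_choose_iff hk (by omega) (by omega)]
    omega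

theorem card_blockParams {n k : ℕ} (hk : 1 ≤ k) :
    #(blockParams n k) =
      if n = k then 1 else if k + 1 ≤ n ∧ n ≤ 2 * k - 1 then 2 * (2 * k - n) else 0 := by
  split_ifs with h1 h2
  · rw [card_eq_one]
    refine ⟨(0, 0), ?_⟩
    ext ⟨a, b⟩
    rw [mem_blockParams_iff hk, mem_singleton, Prod.mk.injEq]
    omega
  · have : blockParams n k = (Ioc (n - k) k).image (fun a => (a, n - k)) ∪
        (Ioc (n - k) k).image (fun b => (n - k, b)) := by
      ext ⟨a, b⟩
      simp only [mem_blockParams_iff hk, mem_union, mem_image, mem_Ioc, Prod.mk.injEq,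
        existsAndEq, true_and, exists_eq_right_right]
      omega
    rw [this, card_union_of_disjoint, card_image_of_injective _ (Prod.mk_left_injective _),
      card_image_of_injective _ (Prod.mk_right_injective _), Nat.card_Ioc]
    · omega
    · simp only [disjoint_left, mem_image, mem_Ioc]
      rintro _ ⟨a, ha, rfl⟩ ⟨b, hb, hab⟩
      simp only [Prod.mk.injEq] at hab
      omega
  · rw [card_eq_zero, eq_empty_iff_forall_notMem]
    rintro ⟨a, b⟩
    rw [mem_blockParams_iff hk]
    omega

end Arithmetic

theorem card_avoiders_containsOnce_eq_card_blockParams (n k : ℕ) :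
    Nat.card {π : Fin n → Fin n // Bijective π ∧ Avoids p132 π ∧ Avoids p321 π ∧
      ContainsOnce (fun i : Fin k => i) π} = #(blockParams n k) := by
  rw [← Nat.card_eq_finsetCard]
  refine (Nat.card_eq_of_bijective (fun p => ⟨blockPerm p.1.1 p.1.2 (mem_blockParams.1 p.2).1,
    blockPerm_bijective _, avoids_p132_blockPerm _, avoids_p321_blockPerm _,
    (containsOnce_blockPerm_iff _ k).2 (mem_blockParams.1 p.2).2.2⟩) ⟨?_, ?_⟩).symm
  · rintro ⟨⟨a, b⟩, hp⟩ ⟨⟨a', b'⟩, hp'⟩ he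
    obtain ⟨h, hab, -⟩ := mem_blockParams.1 hp
    obtain ⟨h', hab', -⟩ := mem_blockParams.1 hp'
    obtain ⟨rfl, rfl⟩ := (blockPerm_inj h h' hab hab').1 (congrArg Subtype.val he)
    rfl
  · rintro ⟨π, hπ, h132, h321, honce⟩
    obtain ⟨a, b, h, hab, rfl⟩ := exists_eq_blockPerm_of_avoids hπ h132 h321
    exact ⟨⟨(a, b), mem_blockParams.2 ⟨h, hab, (containsOnce_blockPerm_iff h k).1 honce⟩⟩, rfl⟩

/-- for `k ≥ 1`, `|Sₙ(132,321; (1,2,…,k))|` is `1` for `n = k`,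
`2(2k − n)` for `k+1 ≤ n ≤ 2k−1`, and `0` otherwise. -/
theorem stmt7 (k : ℕ) (hk : 1 ≤ k) (n : ℕ) :
    Nat.card {π : Fin n → Fin n // Function.Bijective π ∧
      Avoids p132 π ∧ Avoids p321 π ∧ ContainsOnce (fun i : Fin k => i) π} =
      if n = k then 1
      else if k + 1 ≤ n ∧ n ≤ 2 * k - 1 then 2 * (2 * k - n)
      else 0 := by
  rw [card_avoiders_containsOnce_eq_card_blockParams, card_blockParams hk]
end

section
/- For 1 ≤ d ≤ k−1, the number of permutations of length n avoiding both 132 and 321 and containing the pattern (d+1, d+2, …, k, 1, 2, …, d) exactly once equals 1 for every n ≥ k, and 0 for n < k (generating function x^k/(1−x)). -/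
namespace S8

lemma sm_add {k n : ℕ} {f : Fin k → Fin n} (hf : StrictMono f) :
    ∀ t : ℕ, ∀ i j : Fin k, j.val = i.val + t → (f i).val + t ≤ (f j).val := by
  intro t
  induction t with
  | zero =>
      intro i j h
      have : i = j := Fin.ext (by omega)
      subst this; omega
  | succ t ih =>
      intro i j h
      have hk : i.val + t < k := by omega
      have h1 := ih i ⟨i.val + t, hk⟩ rfl
      have h2 : f ⟨i.val + t, hk⟩ < f j := hf (by rw [Fin.lt_def]; simp; omega)
      rw [Fin.lt_def] at h2
      omega

lemma sm_le {k n : ℕ} {f : Fin k → Fin n} (hf : StrictMono f) (i : Fin k) :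
    i.val ≤ (f i).val := by
  have := sm_add hf i.val ⟨0, Nat.lt_of_le_of_lt (Nat.zero_le _) i.isLt⟩ i (by simp)
  omega

lemma build3 {n : ℕ} {π : Fin n → Fin n} (p : Fin 3 → Fin 3) (i j l : Fin n)
    (hij : i < j) (hjl : j < l)
    (h : ∀ x y : Fin 3, p x < p y ↔ π (![i,j,l] x) < π (![i,j,l] y)) :
    ∃ f, IsOcc p π f := by
  refine ⟨![i,j,l], ?_, h⟩
  intro a b hab
  fin_cases a <;> fin_cases b <;>
    first
      | exact absurd hab (by decide)
      | simpa using hij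
      | simpa using hjl
      | simpa using lt_trans hij hjl

lemma no132 {n : ℕ} {π : Fin n → Fin n} (h : Avoids p132 π) (i j l : Fin n)
    (hij : i < j) (hjl : j < l) (h1 : π i < π l) (h2 : π l < π j) : False := by
  apply h
  apply build3 p132 i j l hij hjl
  have h3 : π i < π j := lt_trans h1 h2
  intro x y
  fin_cases x <;> fin_cases y <;>
    simp [p132] <;>
    first
      | assumption
      | exact not_lt.2 (le_of_lt ‹_›)
      | omega

lemma no321 {n : ℕ} {π : Fin n → Fin n} (h : Avoids p321 π) (i j l : Fin n)
    (hij : i < j) (hjl : j < l) (h1 : π l < π j) (h2 : π j < π i) : False := by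
  apply h
  apply build3 p321 i j l hij hjl
  have h3 : π l < π i := lt_trans h1 h2
  intro x y
  fin_cases x <;> fin_cases y <;>
    simp [p321] <;>
    first
      | assumption
      | exact not_lt.2 (le_of_lt ‹_›)
      | omega

theorem structure_thm {n : ℕ} {π : Fin n → Fin n} (hb : Function.Bijective π)
    (h1 : Avoids p132 π) (h2 : Avoids p321 π) :
    ∃ a m : ℕ, a + m ≤ n ∧ ∀ i : Fin n,
      (π i).val = if i.val < m then i.val + a
        else if i.val < m + a then i.val - m else i.val := by
  rcases Nat.eq_zero_or_pos n with hn | hn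
  · exact ⟨0, 0, by omega, fun i => absurd i.isLt (by omega)⟩
  have inj := hb.1
  set z : Fin n := ⟨0, hn⟩ with hz
  have hzv : z.val = 0 := rfl
  obtain ⟨m, hm⟩ := hb.2 z
  set a := (π z).val with ha
  have hval0 : (π m).val = 0 := by rw [hm]
  have neq : ∀ p q : Fin n, p.val ≠ q.val → (π p).val ≠ (π q).val := by
    intro p q h hv
    exact h (congrArg Fin.val (inj (Fin.ext hv)))
  have S1 : ∀ p q : Fin n, m.val ≤ p.val → p.val < q.val → (π p).val < (π q).val := by
    intro p q hp hpq
    rcases eq_or_lt_of_le hp with he | hlt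
    · have hpm : p = m := Fin.ext he.symm
      subst hpm
      have := neq q p (by omega)
      omega
    · by_contra hc
      have hqp : (π q).val < (π p).val := by
        have := neq p q (by omega); omega
      have hq0 : (π q).val ≠ 0 := by
        have := neq q m (by omega); omega
      exact no132 h1 m p q (Fin.lt_def.2 hlt) (Fin.lt_def.2 hpq)
        (Fin.lt_def.2 (by omega)) (Fin.lt_def.2 hqp)
  have S2 : ∀ p q : Fin n, p.val < q.val → q.val < m.val → (π p).val < (π q).val := by
    intro p q hpq hqm
    by_contra hc
    have hqp : (π q).val < (π p).val := by
      have := neq p q (by omega); omega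
    have hq0 : (π q).val ≠ 0 := by
      have := neq q m (by omega); omega
    exact no321 h2 p q m (Fin.lt_def.2 hpq) (Fin.lt_def.2 hqm)
      (Fin.lt_def.2 (by omega)) (Fin.lt_def.2 hqp)
  have S3 : ∀ t : ℕ, ∀ i : Fin n, i.val = t → t < m.val → (π i).val = t + a := by
    intro t
    induction t with
    | zero =>
        intro i hi _
        have hiz : i = z := Fin.ext (by omega)
        rw [hiz]; omega
    | succ t ih =>
        intro i hi hlt
        have hik : t < n := by omega
        set i' : Fin n := ⟨t, hik⟩ with hi'
        have hi'v : i'.val = t := rfl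
        have hprev : (π i').val = t + a := ih i' rfl (by omega)
        have hmono : (π i').val < (π i).val := S2 i' i (by omega) (by omega)
        by_contra hc
        have hgt : t + a + 1 < (π i).val := by omega
        have hvn : t + a + 1 < n := lt_trans hgt (π i).isLt
        obtain ⟨r, hr⟩ := hb.2 ⟨t + a + 1, hvn⟩
        have hrval : (π r).val = t + a + 1 := by rw [hr]
        clear hr
        rcases lt_trichotomy r.val (t+1) with h | h | h
        · rcases lt_or_eq_of_le (Nat.lt_succ_iff.1 h) with hlt' | heq
          · have := S2 r i' (by omega) (by omega); omega
          · have hre : r = i' := Fin.ext (by omega)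
            rw [hre] at hrval; omega
        · have hre : r = i := Fin.ext (by omega)
          rw [hre] at hrval; omega
        · rcases lt_or_ge r.val m.val with hrm | hmr
          · have := S2 i r (by omega) hrm; omega
          · exact no132 h1 i' i r (Fin.lt_def.2 (by omega)) (Fin.lt_def.2 (by omega))
              (Fin.lt_def.2 (by omega)) (Fin.lt_def.2 (by omega))
  have ham : a + m.val ≤ n := by
    rcases Nat.eq_zero_or_pos m.val with h0 | hpos
    · have hmz : m = z := Fin.ext (by omega)
      rw [hmz] at hval0
      omega
    · have hlt : m.val - 1 < n := by omega
      have h3 := S3 (m.val - 1) ⟨m.val - 1, hlt⟩ rfl (by omega)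
      have h4 := (π ⟨m.val - 1, hlt⟩).isLt
      omega
  have S3' : ∀ q : Fin n, m.val ≤ q.val → ¬ (a ≤ (π q).val ∧ (π q).val < m.val + a) := by
    rintro q hq ⟨hw1, hw2⟩
    have hwa : (π q).val - a < n := by omega
    set q' : Fin n := ⟨(π q).val - a, hwa⟩ with hq'
    have hq'v : q'.val = (π q).val - a := rfl
    have hj := S3 ((π q).val - a) q' rfl (by omega)
    have hje : π q' = π q := Fin.ext (by omega)
    have h5 := congrArg Fin.val (inj hje)
    omega
  have S4 : ∀ t : ℕ, ∀ i : Fin n, i.val = m.val + t →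
      (π i).val = if t < a then t else m.val + t := by
    intro t
    induction t using Nat.strong_induction_on with
    | _ t ih =>
      intro i hi
      rcases Nat.eq_zero_or_pos t with ht0 | htpos
      · subst ht0
        have him : i = m := Fin.ext (by omega)
        subst him
        rcases Nat.eq_zero_or_pos a with ha0 | hapos
        · have hmz : π z = π i := Fin.ext (by omega)
          have h6 := congrArg Fin.val (inj hmz)
          rw [if_neg (by omega : ¬ (0:ℕ) < a)]
          omega
        · rw [if_pos hapos]; omega
      · obtain ⟨t', rfl⟩ : ∃ t', t = t' + 1 := ⟨t - 1, by omega⟩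
        have hik : m.val + t' < n := by omega
        set i' : Fin n := ⟨m.val + t', hik⟩ with hi'
        have hi'v : i'.val = m.val + t' := rfl
        have hprev : (π i').val = if t' < a then t' else m.val + t' :=
          ih t' (by omega) i' rfl
        have hmono : (π i').val < (π i).val := S1 i' i (by omega) (by omega)
        have hmid := not_and_or.mp (S3' i (by omega))
        set v : ℕ := if t' + 1 < a then t' + 1 else m.val + t' + 1 with hv
        have hveq : (if t' + 1 < a then t' + 1 else m.val + (t' + 1)) = v := by
          rw [hv]; split_ifs <;> omega
        rw [hveq]
        have hlow : v ≤ (π i).val := by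
          rcases hmid with hA | hA <;> rw [hv] <;> split_ifs at hprev ⊢ <;> omega
        by_contra hc
        have hgt : v < (π i).val := by omega
        have hvn : v < n := lt_trans hgt (π i).isLt
        obtain ⟨r, hr⟩ := hb.2 ⟨v, hvn⟩
        have hrval : (π r).val = v := by rw [hr]
        clear hr
        rcases lt_or_ge r.val m.val with hrm | hmr
        · have h3 := S3 r.val r rfl hrm
          rw [hv] at hrval
          split_ifs at hrval <;> omega
        · rcases lt_trichotomy r.val i.val with hri | hri | hri
          · have h4 := ih (r.val - m.val) (by omega) r (by omega)
            rw [hv] at hrval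
            split_ifs at hrval h4 <;> omega
          · have hre : r = i := Fin.ext (by omega)
            rw [hre] at hrval; omega
          · have := S1 i r (by omega) hri; omega
  refine ⟨a, m.val, ham, ?_⟩
  intro i
  split_ifs with hA hB
  · have := S3 i.val i rfl hA; omega
  · have := S4 (i.val - m.val) i (by omega)
    rw [if_pos (by omega)] at this; omega
  · have := S4 (i.val - m.val) i (by omega)
    rw [if_neg (by omega)] at this; omega

def tau (k d : ℕ) : Fin k → Fin k :=
  fun i => ⟨(i.val + d) % k, Nat.mod_lt _ i.pos⟩

lemma tau_val {k d : ℕ} (hdk : d < k) (i : Fin k) :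
    (tau k d i).val = if i.val < k - d then i.val + d else i.val + d - k := by
  show (i.val + d) % k = _
  split_ifs with h
  · exact Nat.mod_eq_of_lt (by omega)
  · rw [Nat.mod_eq_sub_mod (by omega)]
    exact Nat.mod_eq_of_lt (by omega)

lemma avoids132_of_formula {n a m : ℕ} {π : Fin n → Fin n}
    (hf : ∀ i : Fin n, (π i).val = if i.val < m then i.val + a
      else if i.val < m + a then i.val - m else i.val) : Avoids p132 π := by
  rintro ⟨f, hsm, hiff⟩
  have h01 : f 0 < f 1 := hsm (by decide)
  have h12 : f 1 < f 2 := hsm (by decide)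
  have hA : π (f 0) < π (f 2) := (hiff 0 2).1 (by decide)
  have hB : π (f 2) < π (f 1) := (hiff 2 1).1 (by decide)
  rw [Fin.lt_def] at h01 h12 hA hB
  have H0 := hf (f 0); have H1 := hf (f 1); have H2 := hf (f 2)
  split_ifs at H0 H1 H2 <;> omega

lemma avoids321_of_formula {n a m : ℕ} {π : Fin n → Fin n}
    (hf : ∀ i : Fin n, (π i).val = if i.val < m then i.val + a
      else if i.val < m + a then i.val - m else i.val) : Avoids p321 π := by
  rintro ⟨f, hsm, hiff⟩
  have h01 : f 0 < f 1 := hsm (by decide)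
  have h12 : f 1 < f 2 := hsm (by decide)
  have hA : π (f 2) < π (f 1) := (hiff 2 1).1 (by decide)
  have hB : π (f 1) < π (f 0) := (hiff 1 0).1 (by decide)
  rw [Fin.lt_def] at h01 h12 hA hB
  have H0 := hf (f 0); have H1 := hf (f 1); have H2 := hf (f 2)
  split_ifs at H0 H1 H2 <;> omega

lemma inv_loc {n a m : ℕ} {π : Fin n → Fin n}
    (hf : ∀ i : Fin n, (π i).val = if i.val < m then i.val + a
      else if i.val < m + a then i.val - m else i.val)
    {p q : Fin n} (hpq : p.val < q.val) (hinv : (π q).val < (π p).val) :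
    p.val < m ∧ m ≤ q.val ∧ q.val < m + a := by
  have Hp := hf p; have Hq := hf q
  split_ifs at Hp Hq <;> omega

lemma occ_loc {k d n a m : ℕ} (hd1 : 1 ≤ d) (hdk : d < k)
    {π : Fin n → Fin n}
    (hf : ∀ i : Fin n, (π i).val = if i.val < m then i.val + a
      else if i.val < m + a then i.val - m else i.val)
    {f : Fin k → Fin n} (ho : IsOcc (tau k d) π f) :
    (∀ i : Fin k, i.val < k - d → (f i).val < m) ∧
    (∀ i : Fin k, k - d ≤ i.val → m ≤ (f i).val ∧ (f i).val < m + a) := by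
  obtain ⟨hsm, hiff⟩ := ho
  have hk2 : 2 ≤ k := by omega
  set i₁ : Fin k := ⟨k - d - 1, by omega⟩ with hi₁
  set i₂ : Fin k := ⟨k - d, by omega⟩ with hi₂
  have hi₁v : i₁.val = k - d - 1 := rfl
  have hi₂v : i₂.val = k - d := rfl
  have hτ1 : (tau k d i₁).val = k - 1 := by
    rw [tau_val hdk]; rw [if_pos (by omega)]; omega
  have hτ2 : (tau k d i₂).val = 0 := by
    rw [tau_val hdk]; rw [if_neg (by omega)]; omega
  have hlt12 : tau k d i₂ < tau k d i₁ := Fin.lt_def.2 (by omega)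
  have hπ21 : (π (f i₂)).val < (π (f i₁)).val := Fin.lt_def.1 ((hiff i₂ i₁).1 hlt12)
  have hf12 : (f i₁).val < (f i₂).val := Fin.lt_def.1 (hsm (Fin.lt_def.2 (by omega)))
  obtain ⟨hL, hM, hR⟩ := inv_loc hf hf12 hπ21
  constructor
  · intro i hi
    have : (f i).val ≤ (f i₁).val := Fin.le_def.1 (hsm.monotone (Fin.le_def.2 (by omega)))
    omega
  · intro i hi
    have hlow : (f i₂).val ≤ (f i).val := Fin.le_def.1 (hsm.monotone (Fin.le_def.2 (by omega)))
    refine ⟨by omega, ?_⟩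
    by_contra hbig
    have Hfi := hf (f i)
    rw [if_neg (by omega), if_neg (by omega)] at Hfi
    have Hfi1 := hf (f i₁)
    rw [if_pos (by omega)] at Hfi1
    have hτi : (tau k d i).val = i.val + d - k := by
      rw [tau_val hdk]; rw [if_neg (by omega)]
    have hlt : tau k d i < tau k d i₁ := Fin.lt_def.2 (by omega)
    have := Fin.lt_def.1 ((hiff i i₁).1 hlt)
    omega

def occF (n m c e K : ℕ) (hn : 0 < n) (k : ℕ) : Fin k → Fin n :=
  fun i => ⟨(if i.val < K then i.val + c else m + (i.val - K) + e) % n, Nat.mod_lt _ hn⟩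

lemma occF_val {n m c e K k : ℕ} (hn : 0 < n)
    (hbound : ∀ i : Fin k, (if i.val < K then i.val + c else m + (i.val - K) + e) < n)
    (i : Fin k) :
    (occF n m c e K hn k i).val = if i.val < K then i.val + c else m + (i.val - K) + e :=
  Nat.mod_eq_of_lt (hbound i)

lemma cons_bound {k d n a m c e : ℕ} (hdk : d < k) (ham : a + m ≤ n)
    (hc : k - d + c ≤ m) (he : d + e ≤ a) :
    ∀ i : Fin k, (if i.val < k - d then i.val + c else m + (i.val - (k - d)) + e) < n := by
  intro i
  have := i.isLt
  split_ifs <;> omega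

lemma isOcc_cons {k d n a m c e : ℕ} (hd1 : 1 ≤ d) (hdk : d < k) (ham : a + m ≤ n)
    (hc : k - d + c ≤ m) (he : d + e ≤ a) (hn : 0 < n) {π : Fin n → Fin n}
    (hf : ∀ i : Fin n, (π i).val = if i.val < m then i.val + a
      else if i.val < m + a then i.val - m else i.val) :
    IsOcc (tau k d) π (occF n m c e (k - d) hn k) := by
  have hbound := cons_bound hdk ham hc he (e := e)
  constructor
  · intro x y hxy
    rw [Fin.lt_def] at hxy
    rw [Fin.lt_def, occF_val hn hbound, occF_val hn hbound]
    have := x.isLt; have := y.isLt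
    split_ifs <;> omega
  · intro x y
    rw [Fin.lt_def, Fin.lt_def, tau_val hdk, tau_val hdk, hf, hf,
        occF_val hn hbound, occF_val hn hbound]
    have := x.isLt; have := y.isLt
    split_ifs <;> omega

end S8

/-- for `1 ≤ d ≤ k−1`, `|Sₙ(132,321; (d+1,…,k,1,…,d))| = 1` for every
`n ≥ k` and `0` for `n < k`. -/
theorem stmt8 (k d : ℕ) (hd1 : 1 ≤ d) (hd2 : d ≤ k - 1) (n : ℕ) :
    Nat.card {π : Fin n → Fin n // Function.Bijective π ∧
      Avoids p132 π ∧ Avoids p321 π ∧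
      ContainsOnce (fun i : Fin k => (⟨(i.val + d) % k, Nat.mod_lt _ i.pos⟩ : Fin k)) π} =
      if k ≤ n then 1 else 0 := by
  have hdk : d < k := by omega
  have hk2 : 2 ≤ k := by omega
  show Nat.card {π : Fin n → Fin n // Function.Bijective π ∧
      Avoids p132 π ∧ Avoids p321 π ∧ ContainsOnce (S8.tau k d) π} = _
  split_ifs with hkn
  · -- k ≤ n : exactly one permutation
    have hn : 0 < n := by omega
    rw [Nat.card_eq_one_iff_unique]
    constructor
    · -- Subsingleton
      have key : ∀ (σ : Fin n → Fin n), Function.Bijective σ → Avoids p132 σ →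
          Avoids p321 σ → ContainsOnce (S8.tau k d) σ → ∀ i : Fin n,
          (σ i).val = if i.val < k - d then i.val + d
            else if i.val < (k - d) + d then i.val - (k - d) else i.val := by
        intro σ hb h1 h2 hc
        obtain ⟨a, m, ham, hfσ⟩ := S8.structure_thm hb h1 h2
        obtain ⟨f, hocc, huniq⟩ := hc
        obtain ⟨loc1, loc2⟩ := S8.occ_loc hd1 hdk hfσ hocc
        obtain ⟨j₁, hj₁v⟩ : ∃ j : Fin k, j.val = k - d - 1 := ⟨⟨k - d - 1, by omega⟩, rfl⟩
        obtain ⟨j₂, hj₂v⟩ : ∃ j : Fin k, j.val = k - d := ⟨⟨k - d, by omega⟩, rfl⟩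
        obtain ⟨jl, hjlv⟩ : ∃ j : Fin k, j.val = k - 1 := ⟨⟨k - 1, by omega⟩, rfl⟩
        obtain ⟨z0, hz0v⟩ : ∃ j : Fin k, j.val = 0 := ⟨⟨0, by omega⟩, rfl⟩
        have e1 : k - d ≤ m := by
          have h9 := loc1 j₁ (by omega)
          have h10 := S8.sm_le hocc.1 j₁
          omega
        have e2 : d ≤ a := by
          have h9 := S8.sm_add hocc.1 (d - 1) j₂ jl (by omega)
          have h10 := (loc2 j₂ (by omega)).1
          have h11 := (loc2 jl (by omega)).2
          omega
        have e3 : m = k - d := by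
          by_contra hne
          have o1 := S8.isOcc_cons (c := 0) (e := 0) hd1 hdk ham (by omega) (by omega) hn hfσ
          have o2 := S8.isOcc_cons (c := 1) (e := 0) hd1 hdk ham (by omega) (by omega) hn hfσ
          have q1 := huniq _ o1
          have q2 := huniq _ o2
          have hv := congrArg Fin.val (congrFun (q1.trans q2.symm) z0)
          rw [S8.occF_val hn (S8.cons_bound hdk ham (by omega) (by omega)),
              S8.occF_val hn (S8.cons_bound hdk ham (by omega) (by omega))] at hv
          rw [if_pos (by omega), if_pos (by omega)] at hv
          omega
        have e4 : a = d := by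
          by_contra hne
          have o1 := S8.isOcc_cons (c := 0) (e := 0) hd1 hdk ham (by omega) (by omega) hn hfσ
          have o2 := S8.isOcc_cons (c := 0) (e := 1) hd1 hdk ham (by omega) (by omega) hn hfσ
          have q1 := huniq _ o1
          have q2 := huniq _ o2
          have hv := congrArg Fin.val (congrFun (q1.trans q2.symm) j₂)
          rw [S8.occF_val hn (S8.cons_bound hdk ham (by omega) (by omega)),
              S8.occF_val hn (S8.cons_bound hdk ham (by omega) (by omega))] at hv
          rw [if_neg (by omega), if_neg (by omega)] at hv
          omega
        intro i
        rw [e3, e4] at hfσ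
        exact hfσ i
      constructor
      rintro ⟨π, hb, h1, h2, hc⟩ ⟨π', hb', h1', h2', hc'⟩
      apply Subtype.ext
      funext i
      apply Fin.ext
      rw [key π hb h1 h2 hc i, key π' hb' h1' h2' hc' i]
    · -- Nonempty
      have hkn' : d + (k - d) ≤ n := by omega
      set π₀ : Fin n → Fin n := fun i =>
        ⟨(if i.val < k - d then i.val + d
          else if i.val < k then i.val - (k - d) else i.val) % n, Nat.mod_lt _ hn⟩ with hπ₀
      have hf₀ : ∀ i : Fin n, (π₀ i).val = if i.val < k - d then i.val + d
          else if i.val < (k - d) + d then i.val - (k - d) else i.val := by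
        intro i
        have hi := i.isLt
        show (if i.val < k - d then i.val + d
          else if i.val < k then i.val - (k - d) else i.val) % n = _
        rw [Nat.mod_eq_of_lt (by split_ifs <;> omega)]
        split_ifs <;> omega
      have hinj : Function.Injective π₀ := by
        intro x y hxy
        have hx := hf₀ x; have hy := hf₀ y
        have hv := congrArg Fin.val hxy
        have := x.isLt; have := y.isLt
        apply Fin.ext
        split_ifs at hx hy <;> omega
      have hbij := Finite.injective_iff_bijective.1 hinj
      have hocc₀ := S8.isOcc_cons (c := 0) (e := 0) hd1 hdk hkn' (by omega) (by omega) hn hf₀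
      refine ⟨⟨π₀, hbij, S8.avoids132_of_formula hf₀, S8.avoids321_of_formula hf₀,
        ⟨_, hocc₀, ?_⟩⟩⟩
      intro g hg
      obtain ⟨loc1, loc2⟩ := S8.occ_loc hd1 hdk hf₀ hg
      funext i
      apply Fin.ext
      have hle := S8.sm_le hg.1 i
      have hii := i.isLt
      have hub : (g i).val ≤ i.val := by
        obtain ⟨jl, hjlv⟩ : ∃ j : Fin k, j.val = k - 1 := ⟨⟨k - 1, by omega⟩, rfl⟩
        have h9 := S8.sm_add hg.1 (k - 1 - i.val) i jl (by omega)
        have h10 : (g jl).val < (k - d) + d := by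
          rcases lt_or_ge jl.val (k - d) with hcase | hcase
          · have := loc1 jl hcase; omega
          · exact (loc2 jl hcase).2
        omega
      rw [S8.occF_val hn (S8.cons_bound hdk hkn' (by omega) (by omega))]
      split_ifs <;> omega
  · -- n < k : empty
    rw [Nat.card_eq_zero]
    left
    constructor
    rintro ⟨π, hb, h1, h2, f, hocc, -⟩
    have := Fintype.card_le_of_injective f hocc.1.injective
    simp only [Fintype.card_fin] at this
    omega
end

section
/- For 1 ≤ d ≤ m−2 ≤ k−2, the only permutation avoiding 132 and 321 and containing the pattern (d+1, d+2, …, m−1, 1, 2, …, d, m, m+1, …, k) exactly once is the pattern itself; i.e., |Sₙ(132,321;τ)| = 1 if n = k and 0 otherwise. -/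
/-- The value at `x` of the "rotation" permutation with block sizes `s`, `t`. -/
def rhoVal (s t x : ℕ) : ℕ :=
  if x < s then x + t else if x < s + t then x - s else x

/-- The rotation permutation `(t+1, …, s+t, 1, …, t, s+t+1, …, n)`. -/
def rho (n s t : ℕ) (h : s + t ≤ n) : Fin n → Fin n := fun i =>
  ⟨rhoVal s t i.val, by unfold rhoVal; split_ifs <;> omega⟩

lemma rho_val {n s t : ℕ} (h : s + t ≤ n) (i : Fin n) :
    (rho n s t h i).val = rhoVal s t i.val := rfl

lemma rho_leftinv {n s t : ℕ} (h : s + t ≤ n) (h' : t + s ≤ n) (i : Fin n) :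
    rho n t s h' (rho n s t h i) = i := by
  apply Fin.ext
  simp only [rho_val, rhoVal]
  split_ifs <;> omega

lemma rho_bijective {n s t : ℕ} (h : s + t ≤ n) : Function.Bijective (rho n s t h) := by
  have h' : t + s ≤ n := by omega
  exact ⟨Function.LeftInverse.injective (rho_leftinv h h'),
    fun y => ⟨rho n t s h' y, rho_leftinv h' h y⟩⟩

lemma occ132_elim {n : ℕ} {π : Fin n → Fin n} {f : Fin 3 → Fin n}
    (hf : IsOcc p132 π f) :
    f 0 < f 1 ∧ f 1 < f 2 ∧ π (f 0) < π (f 2) ∧ π (f 2) < π (f 1) := by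
  obtain ⟨hm, hiff⟩ := hf
  exact ⟨hm (by decide), hm (by decide),
    (hiff 0 2).1 (by decide), (hiff 2 1).1 (by decide)⟩

lemma occ321_elim {n : ℕ} {π : Fin n → Fin n} {f : Fin 3 → Fin n}
    (hf : IsOcc p321 π f) :
    f 0 < f 1 ∧ f 1 < f 2 ∧ π (f 1) < π (f 0) ∧ π (f 2) < π (f 1) := by
  obtain ⟨hm, hiff⟩ := hf
  exact ⟨hm (by decide), hm (by decide),
    (hiff 1 0).1 (by decide), (hiff 2 1).1 (by decide)⟩

lemma has132 {n : ℕ} (π : Fin n → Fin n) (x0 x1 x2 : Fin n)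
    (h01 : x0 < x1) (h12 : x1 < x2) (v02 : π x0 < π x2) (v21 : π x2 < π x1) :
    ∃ f, IsOcc p132 π f := by
  have v01 : π x0 < π x1 := v02.trans v21
  refine ⟨fun i => if i.val = 0 then x0 else if i.val = 1 then x1 else x2, ?_, ?_⟩
  · intro a b hab
    fin_cases a <;> fin_cases b <;>
      first
        | exact absurd hab (by decide)
        | exact h01 | exact h12 | exact h01.trans h12
  · intro i j
    fin_cases i <;> fin_cases j <;>
      first
        | exact iff_of_true (by decide) v01
        | exact iff_of_true (by decide) v02
        | exact iff_of_true (by decide) v21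
        | exact iff_of_false (by decide) (lt_irrefl _)
        | exact iff_of_false (by decide) (asymm v01)
        | exact iff_of_false (by decide) (asymm v02)
        | exact iff_of_false (by decide) (asymm v21)

lemma has321 {n : ℕ} (π : Fin n → Fin n) (x0 x1 x2 : Fin n)
    (h01 : x0 < x1) (h12 : x1 < x2) (v10 : π x1 < π x0) (v21 : π x2 < π x1) :
    ∃ f, IsOcc p321 π f := by
  have v20 : π x2 < π x0 := v21.trans v10
  refine ⟨fun i => if i.val = 0 then x0 else if i.val = 1 then x1 else x2, ?_, ?_⟩
  · intro a b hab
    fin_cases a <;> fin_cases b <;>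
      first
        | exact absurd hab (by decide)
        | exact h01 | exact h12 | exact h01.trans h12
  · intro i j
    fin_cases i <;> fin_cases j <;>
      first
        | exact iff_of_true (by decide) v10
        | exact iff_of_true (by decide) v21
        | exact iff_of_true (by decide) v20
        | exact iff_of_false (by decide) (lt_irrefl _)
        | exact iff_of_false (by decide) (asymm v10)
        | exact iff_of_false (by decide) (asymm v21)
        | exact iff_of_false (by decide) (asymm v20)

lemma rho_avoids132 {n s t : ℕ} (h : s + t ≤ n) : Avoids p132 (rho n s t h) := by
  rintro ⟨f, hf⟩
  obtain ⟨h01, h12, v02, v21⟩ := occ132_elim hf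
  rw [Fin.lt_def] at h01 h12 v02 v21
  rw [rho_val, rho_val] at v02 v21
  unfold rhoVal at v02 v21
  split_ifs at v02 v21 <;> omega

lemma rho_avoids321 {n s t : ℕ} (h : s + t ≤ n) : Avoids p321 (rho n s t h) := by
  rintro ⟨f, hf⟩
  obtain ⟨h01, h12, v10, v21⟩ := occ321_elim hf
  rw [Fin.lt_def] at h01 h12 v10 v21
  rw [rho_val, rho_val] at v10 v21
  unfold rhoVal at v10 v21
  split_ifs at v10 v21 <;> omega

lemma sm_gap {k n : ℕ} {f : Fin k → Fin n} (hf : StrictMono f) :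
    ∀ (c : ℕ) (i j : Fin k), i.val + c = j.val → (f i).val + c ≤ (f j).val := by
  intro c
  induction c with
  | zero => intro i j hij; have : i = j := Fin.ext (by omega); subst this; omega
  | succ c ih =>
    intro i j hij
    have hj1 : j.val - 1 < k := by omega
    have h1 := ih i ⟨j.val - 1, hj1⟩ (by simp; omega)
    have h2 : f ⟨j.val - 1, hj1⟩ < f j := hf (by simp [Fin.lt_def]; omega)
    rw [Fin.lt_def] at h2
    omega

lemma strictMono_fin_id {k : ℕ} {f : Fin k → Fin k} (hf : StrictMono f) : f = id := by
  funext i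
  have hk0 : 0 < k := lt_of_le_of_lt (Nat.zero_le _) i.isLt
  have hkk1 : k - 1 < k := by omega
  have h1 := sm_gap hf i.val ⟨0, hk0⟩ i (by show 0 + i.val = i.val; omega)
  have h2 := sm_gap hf (k - 1 - i.val) i ⟨k - 1, hkk1⟩
    (by show i.val + (k - 1 - i.val) = k - 1; have := i.isLt; omega)
  have h3 := (f ⟨k - 1, hkk1⟩).isLt
  have h4 := i.isLt
  have h5 : (f i).val = i.val := by omega
  exact Fin.ext h5
lemma classify {n : ℕ} (π : Fin n → Fin n) (hbij : Function.Bijective π)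
    (h132 : Avoids p132 π) (h321 : Avoids p321 π) :
    ∃ s t, ∃ h : s + t ≤ n, π = rho n s t h := by
  rcases Nat.eq_zero_or_pos n with hn | hn
  · subst hn; exact ⟨0, 0, le_refl 0, funext fun i => i.elim0⟩
  have hπinj : ∀ a b : Fin n, π a = π b → a = b := fun a b hab => hbij.1 hab
  set e := Equiv.ofBijective π hbij with he
  have hinvv : ∀ x : Fin n, π (e.symm x) = x := fun x => e.apply_symm_apply x
  set z : Fin n := ⟨0, hn⟩ with hz
  have hzval : z.val = 0 := rfl
  set t : ℕ := (π z).val with ht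
  set p0 : Fin n := e.symm z with hp0def
  set s : ℕ := p0.val with hs
  have hp0 : (π p0).val = 0 := by rw [hinvv]
  have big_mono : ∀ p q : Fin n, p < q → t ≤ (π q).val → (π p).val < (π q).val := by
    intro p q hpq hq
    by_contra hc
    push_neg at hc
    have hne : (π q).val ≠ (π p).val := fun hh =>
      absurd (hπinj q p (Fin.ext hh)) (Fin.ne_of_gt hpq)
    rcases eq_or_ne p z with rfl | hpz
    · omega
    · have hpv : p.val ≠ 0 := fun h0 => hpz (Fin.ext (by omega))
      have hzp : z < p := by rw [Fin.lt_def]; omega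
      have hqz : t ≠ (π q).val := by
        intro hh
        have h1 : π z = π q := Fin.ext hh
        have h2 : z = q := hπinj _ _ h1
        rw [h2] at hzp
        exact absurd (hzp.trans hpq) (lt_irrefl _)
      exact h132 (has132 π z p q hzp hpq
        (by rw [Fin.lt_def]; omega) (by rw [Fin.lt_def]; omega))
  have small_mono : ∀ p q : Fin n, p < q → (π p).val < t → (π q).val < t →
      (π p).val < (π q).val := by
    intro p q hpq hp hq
    by_contra hc
    push_neg at hc
    have hne : (π q).val ≠ (π p).val := fun hh =>
      absurd (hπinj q p (Fin.ext hh)) (Fin.ne_of_gt hpq)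
    have hpz : p ≠ z := by intro hh; rw [hh] at hp; omega
    have hpv : p.val ≠ 0 := fun h0 => hpz (Fin.ext (by omega))
    have hzp : z < p := by rw [Fin.lt_def]; omega
    exact h321 (has321 π z p q hzp hpq
      (by rw [Fin.lt_def]; omega) (by rw [Fin.lt_def]; omega))
  have htn : t < n := (π z).isLt
  have pos_of : ∀ v : ℕ, v < n → ∃ w : Fin n, (π w).val = v := fun v hv =>
    ⟨e.symm ⟨v, hv⟩, by rw [hinvv]⟩
  -- C2 : the position of small value j is s + j
  have C2 : ∀ j : ℕ, j < t → ∃ q : Fin n, (π q).val = j ∧ q.val = s + j := by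
    intro j
    induction j using Nat.strong_induction_on with
    | _ j ih =>
    intro hj
    obtain ⟨q, hq⟩ := pos_of j (lt_trans hj htn)
    refine ⟨q, hq, ?_⟩
    rcases Nat.eq_zero_or_pos j with rfl | hj1
    · have h1 : π q = π p0 := Fin.ext (by omega)
      have h2 : q.val = s := congrArg Fin.val (hπinj _ _ h1)
      omega
    · have hge : q.val ≥ s := by
        by_contra hc
        push_neg at hc
        have hqp0 : q < p0 := by rw [Fin.lt_def]; omega
        have := small_mono q p0 hqp0 (by omega) (by omega)
        omega
      have hnotmid : ¬ (q.val < s + j) := by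
        intro hc
        obtain ⟨q', hq'1, hq'2⟩ := ih (q.val - s) (by omega) (by omega)
        have hqq : q' = q := Fin.ext (by omega)
        rw [hqq] at hq'1
        omega
      rcases eq_or_lt_of_le (by omega : s + j ≤ q.val) with heq | hlt
      · omega
      · exfalso
        have hpn : s + j < n := by have := q.isLt; omega
        obtain ⟨r, hr1, hr2⟩ := ih (j - 1) (by omega) (by omega)
        have hrp : r < (⟨s + j, hpn⟩ : Fin n) := by rw [Fin.lt_def]; simp; omega
        have hpq : (⟨s + j, hpn⟩ : Fin n) < q := by rw [Fin.lt_def]; simp; omega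
        rcases lt_or_ge (π ⟨s + j, hpn⟩).val t with hsm | hbg
        · have h1 := small_mono r _ hrp (by omega) hsm
          have h2 := small_mono _ q hpq hsm (by omega)
          omega
        · have hp0p : p0 < (⟨s + j, hpn⟩ : Fin n) := by rw [Fin.lt_def]; simp; omega
          exact h132 (has132 π p0 _ q hp0p hpq
            (by rw [Fin.lt_def]; omega) (by rw [Fin.lt_def]; omega))
  have hstn : s + t ≤ n := by
    rcases Nat.eq_zero_or_pos t with h0 | h0
    · rcases eq_or_ne p0 z with hh | hh
      · have := congrArg Fin.val hh
        omega
      · exfalso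
        have hpv : p0.val ≠ 0 := fun hx => hh (Fin.ext (by omega))
        have hzp0 : z < p0 := by rw [Fin.lt_def]; omega
        have := big_mono z p0 hzp0 (by omega)
        omega
    · obtain ⟨q, hq1, hq2⟩ := C2 (t - 1) (by omega)
      have := q.isLt
      omega
  -- C3 : the value at position i < s is i + t
  have C3 : ∀ i : ℕ, i < s → ∃ q : Fin n, q.val = i ∧ (π q).val = i + t := by
    intro i
    induction i using Nat.strong_induction_on with
    | _ i ih =>
    intro hi
    have hin : i < n := by have := p0.isLt; omega
    refine ⟨⟨i, hin⟩, rfl, ?_⟩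
    have hbig : t ≤ (π ⟨i, hin⟩).val := by
      by_contra hc
      push_neg at hc
      have hip0 : (⟨i, hin⟩ : Fin n) < p0 := by rw [Fin.lt_def]; simp; omega
      have := small_mono _ p0 hip0 hc (by omega)
      omega
    have hub : (π ⟨i, hin⟩).val ≤ i + t := by
      by_contra hc
      push_neg at hc
      obtain ⟨w, hw⟩ := pos_of (i + t) (by omega)
      rcases lt_trichotomy w.val i with hlt | heq | hgt
      · obtain ⟨q', hq'1, hq'2⟩ := ih w.val hlt (by omega)
        have hqq : q' = w := Fin.ext (by omega)
        rw [hqq] at hq'2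
        omega
      · have hwi : w = ⟨i, hin⟩ := Fin.ext (show w.val = i from by omega)
        rw [hwi] at hw
        omega
      · have hqw : (⟨i, hin⟩ : Fin n) < w := by rw [Fin.lt_def]; simp; omega
        have := big_mono _ w hqw (by omega)
        omega
    rcases eq_or_lt_of_le hub with heq | hlt
    · exact heq
    · exfalso
      obtain ⟨q', hq'1, hq'2⟩ := ih ((π ⟨i, hin⟩).val - t) (by omega) (by omega)
      have h1 : π q' = π ⟨i, hin⟩ := Fin.ext (by omega)
      have h2 : q'.val = i := congrArg Fin.val (hπinj _ _ h1)
      omega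
  -- C4 : the value at position i ≥ s + t is i
  have C4 : ∀ i : ℕ, ∀ hi : i < n, s + t ≤ i → (π ⟨i, hi⟩).val = i := by
    intro i
    induction i using Nat.strong_induction_on with
    | _ i ih =>
    intro hi hst
    rcases lt_trichotomy (π ⟨i, hi⟩).val i with hlt | heq | hgt
    · exfalso
      rcases lt_or_ge (π ⟨i, hi⟩).val t with hsm | h1
      · obtain ⟨r, hr1, hr2⟩ := C2 (t - 1) (by omega)
        have hrq : r < (⟨i, hi⟩ : Fin n) := by rw [Fin.lt_def]; simp; omega
        have := small_mono r _ hrq (by omega) hsm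
        omega
      rcases lt_or_ge (π ⟨i, hi⟩).val (s + t) with hmid | h2
      · obtain ⟨q', hq'1, hq'2⟩ := C3 ((π ⟨i, hi⟩).val - t) (by omega)
        have h3 : π q' = π ⟨i, hi⟩ := Fin.ext (by omega)
        have h4 : q'.val = i := congrArg Fin.val (hπinj _ _ h3)
        omega
      · have h5 := ih (π ⟨i, hi⟩).val hlt (by omega) (by omega)
        have h6 : π ⟨(π ⟨i, hi⟩).val, by omega⟩ = π ⟨i, hi⟩ := Fin.ext (by omega)
        have h7 : (π ⟨i, hi⟩).val = i := congrArg Fin.val (hπinj _ _ h6)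
        omega
    · exact heq
    · exfalso
      obtain ⟨w, hw⟩ := pos_of i hi
      rcases lt_or_ge w.val s with h1 | h1
      · obtain ⟨q', hq'1, hq'2⟩ := C3 w.val h1
        have hqq : q' = w := Fin.ext (by omega)
        rw [hqq] at hq'2
        omega
      rcases lt_or_ge w.val (s + t) with h2 | h2
      · obtain ⟨q', hq'1, hq'2⟩ := C2 (w.val - s) (by omega)
        have hqq : q' = w := Fin.ext (by omega)
        rw [hqq] at hq'1
        omega
      rcases lt_trichotomy w.val i with h3 | h3 | h3
      · have h5 := ih w.val h3 (by omega) (by omega)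
        have h6 : (π w).val = w.val := h5
        omega
      · have hwi : w = ⟨i, hi⟩ := Fin.ext (show w.val = i from h3)
        rw [hwi] at hw
        omega
      · have hqw : (⟨i, hi⟩ : Fin n) < w := by rw [Fin.lt_def]; simp; omega
        have := big_mono _ w hqw (by omega)
        omega
  refine ⟨s, t, hstn, funext fun i => Fin.ext ?_⟩
  rw [rho_val]
  unfold rhoVal
  split_ifs with h1 h2
  · obtain ⟨q', hq'1, hq'2⟩ := C3 i.val h1
    have hqq : q' = i := Fin.ext hq'1
    rw [hqq] at hq'2
    exact hq'2
  · obtain ⟨q', hq'1, hq'2⟩ := C2 (i.val - s) (by omega)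
    have hqq : q' = i := Fin.ext (by omega)
    rw [hqq] at hq'1
    exact hq'1
  · exact C4 i.val i.isLt (by omega)
def occVal (S T s b a c j : ℕ) : ℕ :=
  if j < S then b + j else if j < S + T then s + a + (j - S) else c + (j - (S + T))

/-- the standard occurrences of `rho k S T` inside `rho n s t` -/
lemma occ_isOcc {k n S T s t : ℕ} (hST : S + T ≤ k) (hst : s + t ≤ n)
    (b a c : ℕ) (hb : b + S ≤ s) (ha : a + T ≤ t) (hc1 : s + t ≤ c)
    (hc2 : c + (k - (S + T)) ≤ n) :
    IsOcc (rho k S T hST) (rho n s t hst)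
      (fun j => ⟨occVal S T s b a c j.val, by
        have := j.isLt; unfold occVal; split_ifs <;> omega⟩) := by
  constructor
  · intro x y hxy
    rw [Fin.lt_def] at hxy ⊢
    simp only
    have hx := x.isLt
    have hy := y.isLt
    unfold occVal
    split_ifs <;> omega
  · intro x y
    rw [Fin.lt_def, Fin.lt_def]
    rw [rho_val, rho_val, rho_val, rho_val]
    simp only
    have hx := x.isLt
    have hy := y.isLt
    unfold rhoVal occVal
    split_ifs <;> omega

/-- inversions of rho force block membership -/
lemma rho_inv {n s t : ℕ} (hst : s + t ≤ n) (x y : Fin n) (hxy : x < y)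
    (hv : (rho n s t hst y).val < (rho n s t hst x).val) :
    x.val < s ∧ s ≤ y.val ∧ y.val < s + t := by
  rw [Fin.lt_def] at hxy
  rw [rho_val, rho_val] at hv
  unfold rhoVal at hv
  have := y.isLt
  split_ifs at hv <;> omega
lemma occ_bounds {k n S T s t : ℕ} (hST : S + T ≤ k) (hst : s + t ≤ n)
    (hS : 1 ≤ S) (hT : 1 ≤ T) (hR : S + T < k) {f : Fin k → Fin n}
    (hf : IsOcc (rho k S T hST) (rho n s t hst) f) :
    S ≤ s ∧ T ≤ t ∧ s + t + (k - (S + T)) ≤ n := by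
  obtain ⟨hmono, hiff⟩ := hf
  have hk0 : 0 < k := by omega
  have hkS : S < k := by omega
  have hkS1 : S - 1 < k := by omega
  have hkST1 : S + T - 1 < k := by omega
  have hkk1 : k - 1 < k := by omega
  -- B positions map into [0, s)
  have hB : ∀ x : Fin k, x.val < S → (f x).val < s := by
    intro x hx
    have hlt : rho k S T hST (⟨S, hkS⟩ : Fin k) < rho k S T hST x := by
      rw [Fin.lt_def, rho_val, rho_val]
      simp only [Fin.val_mk]
      unfold rhoVal
      split_ifs <;> omega
    have hv := (hiff ⟨S, hkS⟩ x).1 hlt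
    rw [Fin.lt_def] at hv
    have hpos : x < (⟨S, hkS⟩ : Fin k) := by rw [Fin.lt_def]; exact hx
    exact (rho_inv hst (f x) (f ⟨S, hkS⟩) (hmono hpos) hv).1
  -- A positions map into [s, s+t)
  have hA : ∀ y : Fin k, S ≤ y.val → y.val < S + T →
      s ≤ (f y).val ∧ (f y).val < s + t := by
    intro y hy1 hy2
    have hlt : rho k S T hST y < rho k S T hST (⟨0, hk0⟩ : Fin k) := by
      rw [Fin.lt_def, rho_val, rho_val]
      simp only [Fin.val_mk]
      unfold rhoVal
      split_ifs <;> omega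
    have hv := (hiff y ⟨0, hk0⟩).1 hlt
    rw [Fin.lt_def] at hv
    have hpos : (⟨0, hk0⟩ : Fin k) < y := by
      rw [Fin.lt_def]; simp only [Fin.val_mk]; omega
    have := rho_inv hst (f ⟨0, hk0⟩) (f y) (hmono hpos) hv
    exact ⟨this.2.1, this.2.2⟩
  -- C positions map into [s+t, n)
  have hC : ∀ l : Fin k, S + T ≤ l.val → s + t ≤ (f l).val := by
    intro l hl
    have hlt : rho k S T hST (⟨0, hk0⟩ : Fin k) < rho k S T hST l := by
      rw [Fin.lt_def, rho_val, rho_val]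
      simp only [Fin.val_mk]
      unfold rhoVal
      split_ifs <;> omega
    have hv := (hiff ⟨0, hk0⟩ l).1 hlt
    rw [Fin.lt_def, rho_val, rho_val] at hv
    have hb0 : (f ⟨0, hk0⟩).val < s := hB ⟨0, hk0⟩ (by show 0 < S; omega)
    have hjA := hA ⟨S, hkS⟩ (by show S ≤ S; omega) (by show S < S + T; omega)
    rw [Fin.val_mk] at hjA
    have hpos : (⟨S, hkS⟩ : Fin k) < l := by
      rw [Fin.lt_def]; simp only [Fin.val_mk]; omega
    have hfl : (f ⟨S, hkS⟩).val < (f l).val := by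
      have := hmono hpos; rwa [Fin.lt_def] at this
    rw [Fin.val_mk] at hv hb0
    unfold rhoVal at hv
    split_ifs at hv <;> omega
  -- now the three gap bounds
  have g1 := sm_gap hmono (S - 1) ⟨0, hk0⟩ ⟨S - 1, hkS1⟩
    (show (0 : ℕ) + (S - 1) = S - 1 by omega)
  have g1' : (f ⟨S - 1, hkS1⟩).val < s := hB ⟨S - 1, hkS1⟩ (by
    show S - 1 < S; omega)
  have g2 := sm_gap hmono (T - 1) ⟨S, hkS⟩ ⟨S + T - 1, hkST1⟩
    (show S + (T - 1) = S + T - 1 by omega)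
  have g2a : s ≤ (f ⟨S, hkS⟩).val := (hA ⟨S, hkS⟩ (by show S ≤ S; omega)
    (by show S < S + T; omega)).1
  have g2b : (f ⟨S + T - 1, hkST1⟩).val < s + t :=
    (hA ⟨S + T - 1, hkST1⟩ (by show S ≤ S + T - 1; omega)
      (by show S + T - 1 < S + T; omega)).2
  have g3 := sm_gap hmono (k - 1 - (S + T)) ⟨S + T, hR⟩ ⟨k - 1, hkk1⟩
    (show S + T + (k - 1 - (S + T)) = k - 1 by omega)
  have g3a : s + t ≤ (f ⟨S + T, hR⟩).val := hC ⟨S + T, hR⟩ (by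
    show S + T ≤ S + T; omega)
  have g3b : (f ⟨k - 1, hkk1⟩).val < n := (f ⟨k - 1, hkk1⟩).isLt
  have g0 : (0 : ℕ) ≤ (f ⟨0, hk0⟩).val := Nat.zero_le _
  rw [Fin.val_mk] at g1' g2a g2b g3a
  refine ⟨by omega, by omega, by omega⟩

lemma main_count (k m d : ℕ) (hd1 : 1 ≤ d) (hd2 : d ≤ m - 2) (hm : m ≤ k) (n : ℕ)
    (hST : (m - 1 - d) + d ≤ k) (τ : Fin k → Fin k)
    (hτ : τ = rho k (m - 1 - d) d hST) :
    Nat.card {π : Fin n → Fin n // Function.Bijective π ∧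
      Avoids p132 π ∧ Avoids p321 π ∧ ContainsOnce τ π} =
      if n = k then 1 else 0 := by
  subst hτ
  have hm3 : 3 ≤ m := by omega
  have hS : 1 ≤ m - 1 - d := by omega
  have hR : (m - 1 - d) + d < k := by omega
  have hk0 : 0 < k := by omega
  have hkk1 : k - 1 < k := by omega
  rcases lt_trichotomy n k with hlt | heq | hgt
  · rw [if_neg (by omega)]
    haveI : IsEmpty {π : Fin n → Fin n // Function.Bijective π ∧
        Avoids p132 π ∧ Avoids p321 π ∧
        ContainsOnce (rho k (m - 1 - d) d hST) π} := by
      constructor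
      rintro ⟨π, hb, hv, hw, hc⟩
      obtain ⟨f, ⟨hmono, -⟩, -⟩ := hc
      have g := sm_gap hmono (k - 1) ⟨0, hk0⟩ ⟨k - 1, hkk1⟩
        (by show 0 + (k - 1) = k - 1; omega)
      have h2 := (f ⟨k - 1, hkk1⟩).isLt
      omega
    exact Nat.card_of_isEmpty
  · subst heq
    rw [if_pos rfl]
    have huniqπ : ∀ π : Fin n → Fin n, Function.Bijective π → Avoids p132 π →
        Avoids p321 π → ContainsOnce (rho n (m - 1 - d) d hST) π →
        π = rho n (m - 1 - d) d hST := by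
      intro π hb hv hw hc
      obtain ⟨s, t, hst, rfl⟩ := classify π hb hv hw
      obtain ⟨f, hf, -⟩ := hc
      obtain ⟨b1, b2, b3⟩ := occ_bounds hST hst hS hd1 hR hf
      have hs : s = m - 1 - d := by omega
      have ht : t = d := by omega
      subst hs; subst ht
      rfl
    apply Nat.card_eq_one_iff_unique.mpr
    constructor
    · constructor
      rintro ⟨π1, hb1, v1, w1, c1⟩ ⟨π2, hb2, v2, w2, c2⟩
      exact Subtype.ext ((huniqπ π1 hb1 v1 w1 c1).trans (huniqπ π2 hb2 v2 w2 c2).symm)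
    · refine ⟨⟨rho n (m - 1 - d) d hST, rho_bijective _, rho_avoids132 _,
        rho_avoids321 _, ?_⟩⟩
      refine ⟨id, ⟨strictMono_id, fun i j => Iff.rfl⟩, fun g hg => strictMono_fin_id hg.1⟩
  · rw [if_neg (by omega)]
    haveI : IsEmpty {π : Fin n → Fin n // Function.Bijective π ∧
        Avoids p132 π ∧ Avoids p321 π ∧
        ContainsOnce (rho k (m - 1 - d) d hST) π} := by
      constructor
      rintro ⟨π, hb, hv, hw, hc⟩
      obtain ⟨s, t, hst, rfl⟩ := classify π hb hv hw
      obtain ⟨f, hf, huniq⟩ := hc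
      obtain ⟨b1, b2, b3⟩ := occ_bounds hST hst hS hd1 hR hf
      by_cases hc1 : d < t
      · have o1 := occ_isOcc hST hst 0 0 (s + t) (by omega) (by omega)
          (le_refl _) (by omega)
        have o2 := occ_isOcc hST hst 0 (t - d) (s + t) (by omega) (by omega)
          (le_refl _) (by omega)
        have e := congrFun ((huniq _ o1).trans (huniq _ o2).symm)
          ⟨m - 1 - d, by omega⟩
        have ev : occVal (m - 1 - d) d s 0 0 (s + t) (m - 1 - d) =
            occVal (m - 1 - d) d s 0 (t - d) (s + t) (m - 1 - d) :=
          congrArg Fin.val e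
        unfold occVal at ev
        split_ifs at ev <;> omega
      by_cases hc2 : m - 1 - d < s
      · have o1 := occ_isOcc hST hst 0 0 (s + t) (by omega) (by omega)
          (le_refl _) (by omega)
        have o2 := occ_isOcc hST hst (s - (m - 1 - d)) 0 (s + t) (by omega)
          (by omega) (le_refl _) (by omega)
        have e := congrFun ((huniq _ o1).trans (huniq _ o2).symm) ⟨0, hk0⟩
        have ev : occVal (m - 1 - d) d s 0 0 (s + t) 0 =
            occVal (m - 1 - d) d s (s - (m - 1 - d)) 0 (s + t) 0 :=
          congrArg Fin.val e
        unfold occVal at ev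
        split_ifs at ev <;> omega
      · have hc3 : s + t + (k - ((m - 1 - d) + d)) < n := by omega
        have o1 := occ_isOcc hST hst 0 0 (s + t) (by omega) (by omega)
          (le_refl _) (by omega)
        have o2 := occ_isOcc hST hst 0 0 (n - (k - ((m - 1 - d) + d)))
          (by omega) (by omega) (by omega) (by omega)
        have e := congrFun ((huniq _ o1).trans (huniq _ o2).symm)
          ⟨(m - 1 - d) + d, hR⟩
        have ev : occVal (m - 1 - d) d s 0 0 (s + t) ((m - 1 - d) + d) =
            occVal (m - 1 - d) d s 0 0 (n - (k - ((m - 1 - d) + d)))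
              ((m - 1 - d) + d) :=
          congrArg Fin.val e
        unfold occVal at ev
        split_ifs at ev <;> omega
    exact Nat.card_of_isEmpty

/-- for `1 ≤ d ≤ m−2 ≤ k−2`, the only permutation avoiding `132` and `321`
and containing `(d+1, …, m−1, 1, …, d, m, m+1, …, k)` exactly once is the pattern itself:
the count is `1` for `n = k` and `0` otherwise. -/
theorem stmt9 (k m d : ℕ) (hd1 : 1 ≤ d) (hd2 : d ≤ m - 2) (hm : m ≤ k) (n : ℕ) :
    Nat.card {π : Fin n → Fin n // Function.Bijective π ∧
      Avoids p132 π ∧ Avoids p321 π ∧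
      ContainsOnce (fun i : Fin k =>
        if h : i.val < m - 1 then
          (⟨(i.val + d) % (m - 1),
            lt_of_lt_of_le (Nat.mod_lt _ (by omega)) (by omega)⟩ : Fin k)
        else i) π} =
      if n = k then 1 else 0 := by
  have hST : (m - 1 - d) + d ≤ k := by omega
  refine main_count k m d hd1 hd2 hm n hST _ ?_
  funext i
  by_cases h1 : i.val < m - 1
  · rw [dif_pos h1]
    apply Fin.ext
    show (i.val + d) % (m - 1) = rhoVal (m - 1 - d) d i.val
    have e1 : (i.val + d) % (m - 1) =
        if i.val < m - 1 - d then i.val + d else i.val + d - (m - 1) := by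
      split_ifs with h2
      · exact Nat.mod_eq_of_lt (by omega)
      · rw [Nat.mod_eq_sub_mod (by omega : m - 1 ≤ i.val + d)]
        exact Nat.mod_eq_of_lt (by omega)
    rw [e1]
    unfold rhoVal
    split_ifs <;> omega
  · rw [dif_neg h1]
    apply Fin.ext
    show i.val = rhoVal (m - 1 - d) d i.val
    have := i.isLt
    unfold rhoVal
    split_ifs <;> omega
end
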